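/- arXiv:2108.10040 — 10 statements merged into one kernel-verified Lean document; each statement's English description precedes it below -/
import Mathlib

section
/- Fix d, n ≥ 1 and a permutation π of Fin n. For arrays T : (Fin n → Fin d) → (Fin n → Fin d) → ℝ (the components T^{ξ₁…ξₙ}_{η₁…ηₙ} of an (n,n)-tensor, first argument the upper multi-index ξ, second the lower multi-index η) define the complete contraction S(T) = ∑_{ξ : Fin n → Fin d} T ξ (ξ ∘ π), i.e. the lower index string is the permutation π of the upper one. Then for every T and all μ, ν ∈ Fin d: ∑_{j ∈ Fin n} ∑_{ξ, η : Fin n → Fin d with ξ j = ν} (∂S/∂T_{(ξ,η)})(T) · T (Function.update ξ j μ) η = ∑_{k ∈ Fin n} ∑_{ξ, η : Fin n → Fin d with η k = μ} (∂S/∂T_{(ξ,η)})(T) · T ξ (Function.update η k ν). Equivalently, the combination in which, term by term, exactly one contracted upper index of S is replaced by ν in the derivative and by μ in the remaining tensor factor (with a minus sign), and exactly one contracted lower index is replaced by μ in the derivative and by ν in the tensor factor (with a plus sign), vanishes identically. -/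
/-!
`S` is the linear functional `T ↦ ∑ ξ, T ξ (ξ ∘ π)`, so `∂S/∂T_{(ξ,η)}` is `1` when `η = ξ ∘ π`
and `0` otherwise. Both sides therefore reduce to single sums over `ξ`, and they are matched by
the bijection `ξ ↦ Function.update ξ j μ` from `{ξ | ξ j = ν}` onto `{ξ | ξ j = μ}`: the upper
index `j` of `ξ` sits in lower position `π⁻¹ j` of `ξ ∘ π`.
-/

open Function

section Contraction

variable {𝕜 : Type*} [NontriviallyNormedField 𝕜] {α β : Type*} [Fintype α]

noncomputable def contractionCLM (σ : α → β) : (α → β → 𝕜) →L[𝕜] 𝕜 :=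
  ∑ ξ, (ContinuousLinearMap.proj (R := 𝕜) (φ := fun _ : β => 𝕜) (σ ξ)).comp
    (ContinuousLinearMap.proj (φ := fun _ : α => β → 𝕜) ξ)

theorem contractionCLM_apply (σ : α → β) (T : α → β → 𝕜) :
    contractionCLM σ T = ∑ ξ, T ξ (σ ξ) := by
  simp [contractionCLM]

theorem fderiv_sum_apply_apply [Fintype β] (σ : α → β) (T : α → β → 𝕜) :
    fderiv 𝕜 (fun T : α → β → 𝕜 => ∑ ξ, T ξ (σ ξ)) T = contractionCLM σ := by
  simp_rw [← contractionCLM_apply σ]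
  exact (contractionCLM (𝕜 := 𝕜) σ).fderiv

theorem contractionCLM_apply_indicator [DecidableEq α] [DecidableEq β] (σ : α → β)
    (ξ : α) (η : β) :
    contractionCLM σ (fun ξ' η' => if ξ' = ξ ∧ η' = η then (1 : 𝕜) else 0)
      = if η = σ ξ then 1 else 0 := by
  rw [contractionCLM_apply, Fintype.sum_eq_single ξ] <;> simp +contextual [eq_comm]

end Contraction

theorem Fintype.sum_ite_mul_ite_eq {α R : Type*} [Fintype α] [DecidableEq α] [Semiring R]
    (p : α → Prop) [DecidablePred p] (f : α → R) (a : α) :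
    (∑ x, if p x then (if x = a then 1 else 0) * f x else 0) = if p a then f a else 0 := by
  rw [Fintype.sum_eq_single a] <;> simp +contextual

theorem Fintype.sum_ite_apply_eq_update {ι β M : Type*} [Fintype ι] [DecidableEq ι] [Fintype β]
    [DecidableEq β] [AddCommMonoid M] (F : (ι → β) → (ι → β) → M) (j : ι) (a b : β) :
    (∑ ξ, if ξ j = b then F (update ξ j a) ξ else 0)
      = ∑ ξ, if ξ j = a then F ξ (update ξ j b) else 0 := by
  simp only [← Finset.sum_filter]
  refine Finset.sum_bij' (fun ξ _ => update ξ j a) (fun ξ _ => update ξ j b) ?_ ?_ ?_ ?_ ?_ <;>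
    intro ξ hξ <;> rw [Finset.mem_filter] at hξ <;> simp [← hξ.2]

theorem tensor_contraction_identity_general (d n : ℕ)
    (π : Equiv.Perm (Fin n))
    (S : ((Fin n → Fin d) → (Fin n → Fin d) → ℝ) → ℝ)
    (hS : S = fun T => ∑ ξ : Fin n → Fin d, T ξ (ξ ∘ π)) :
    ∀ (T : (Fin n → Fin d) → (Fin n → Fin d) → ℝ) (μ ν : Fin d),
      (∑ j : Fin n, ∑ ξ : Fin n → Fin d, ∑ η : Fin n → Fin d,
        if ξ j = ν then
          fderiv ℝ S T (fun ξ' η' => if ξ' = ξ ∧ η' = η then 1 else 0)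
            * T (Function.update ξ j μ) η
        else 0)
      = ∑ k : Fin n, ∑ ξ : Fin n → Fin d, ∑ η : Fin n → Fin d,
        if η k = μ then
          fderiv ℝ S T (fun ξ' η' => if ξ' = ξ ∧ η' = η then 1 else 0)
            * T ξ (Function.update η k ν)
        else 0 := by
  intro T μ ν
  subst hS
  simp only [fderiv_sum_apply_apply, contractionCLM_apply_indicator, Fintype.sum_ite_mul_ite_eq]
  conv_rhs => rw [← π.symm.sum_comp]
  refine Fintype.sum_congr _ _ fun j => ?_
  rw [Fintype.sum_ite_apply_eq_update (fun ξ' ξ => T ξ' (ξ ∘ π))]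
  simp only [update_comp_equiv, comp_apply, Equiv.apply_symm_apply]

/-- The main tensor identity for the complete contraction
`S(T) = ∑ ξ, T ξ (ξ ∘ π)` of an `(n,n)`-tensor: term by term, replacing one
contracted upper index by `ν` in the derivative and by `μ` in the remaining
tensor factor equals replacing one contracted lower index by `μ` in the
derivative and by `ν` in the tensor factor. -/
theorem tensor_contraction_identity (d n : ℕ) (hd : 1 ≤ d) (hn : 1 ≤ n)
    (π : Equiv.Perm (Fin n))
    (S : ((Fin n → Fin d) → (Fin n → Fin d) → ℝ) → ℝ)
    (hS : S = fun T => ∑ ξ : Fin n → Fin d, T ξ (ξ ∘ π)) :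
    ∀ (T : (Fin n → Fin d) → (Fin n → Fin d) → ℝ) (μ ν : Fin d),
      (∑ j : Fin n, ∑ ξ : Fin n → Fin d, ∑ η : Fin n → Fin d,
        if ξ j = ν then
          fderiv ℝ S T (fun ξ' η' => if ξ' = ξ ∧ η' = η then 1 else 0)
            * T (Function.update ξ j μ) η
        else 0)
      = ∑ k : Fin n, ∑ ξ : Fin n → Fin d, ∑ η : Fin n → Fin d,
        if η k = μ then
          fderiv ℝ S T (fun ξ' η' => if ξ' = ξ ∧ η' = η then 1 else 0)
            * T ξ (Function.update η k ν)
        else 0 :=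
  tensor_contraction_identity_general d n π S hS
end

section
/- Let d, n, m ≥ 1 and let S : Matrix (Fin d) (Fin d) ℝ × ((Fin n → Fin d) → (Fin m → Fin d) → ℝ) → ℝ be differentiable at a point (g, T). Assume that for all μ, ν ∈ Fin d the identity ∑_{β} (∂S/∂g_{(μ,β)}) · g ν β + ∑_{β} (∂S/∂g_{(β,μ)}) · g β ν − ∑_{j ∈ Fin n} ∑_{ξ, η with ξ j = ν} (∂S/∂T_{(ξ,η)}) · T (Function.update ξ j μ) η + ∑_{k ∈ Fin m} ∑_{ξ, η with η k = μ} (∂S/∂T_{(ξ,η)}) · T ξ (Function.update η k ν) = 0 holds at (g, T), where all partial derivatives are taken at (g, T). Then 2 · ∑_{α,β} (∂S/∂g_{(α,β)}) · g α β = (n − m) · ∑_{ξ,η} (∂S/∂T_{(ξ,η)}) · T ξ η. -/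
/-!
Put `ν = μ` in the identity and sum over `μ`. Both metric terms become the full contraction
`∑ (∂S/∂g) g`. In a tensor term, the constraint `ξ j = μ` pins the summation variable `μ`, so
`T (update ξ j μ) η` is just `T ξ η`: each of the `n` upper and `m` lower slots contributes the
full contraction `∑ (∂S/∂T) T`, with opposite signs.
-/

open Finset

section Contraction

variable {ι ι' κ R : Type*} [Fintype κ] [NonAssocSemiring R]

theorem sum_sum_mul_add_sum_sum_mul_swap (a g : κ → κ → R) :
    ∑ μ, ((∑ β, a μ β * g μ β) + ∑ β, a β μ * g β μ) = 2 * ∑ α, ∑ β, a α β * g α β := by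
  rw [sum_add_distrib, sum_comm (f := fun μ β => a β μ * g β μ), two_mul]

variable [DecidableEq κ] [Fintype ι] [DecidableEq ι] [Fintype ι'] [DecidableEq ι']

theorem sum_sum_ite_update_left (c T : (ι → κ) → (ι' → κ) → R) :
    ∑ μ, ∑ j, ∑ ξ, ∑ η, (if ξ j = μ then c ξ η * T (Function.update ξ j μ) η else 0)
      = Fintype.card ι * ∑ ξ, ∑ η, c ξ η * T ξ η := by
  calc _ = ∑ j : ι, ∑ ξ, ∑ η, ∑ μ,
        (if ξ j = μ then c ξ η * T (Function.update ξ j μ) η else 0) := by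
        rw [sum_comm]
        refine sum_congr rfl fun j _ => ?_
        rw [sum_comm]
        exact sum_congr rfl fun ξ _ => sum_comm
    _ = _ := by simp

theorem sum_sum_ite_update_right (c T : (ι' → κ) → (ι → κ) → R) :
    ∑ μ, ∑ k, ∑ ξ, ∑ η, (if η k = μ then c ξ η * T ξ (Function.update η k μ) else 0)
      = Fintype.card ι * ∑ ξ, ∑ η, c ξ η * T ξ η := by
  calc _ = ∑ k : ι, ∑ ξ, ∑ η, ∑ μ,
        (if η k = μ then c ξ η * T ξ (Function.update η k μ) else 0) := by
        rw [sum_comm]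
        refine sum_congr rfl fun k _ => ?_
        rw [sum_comm]
        exact sum_congr rfl fun ξ _ => sum_comm
    _ = _ := by simp

end Contraction

theorem trace_of_tensor_identity_general (d n m : ℕ)
    (S : Matrix (Fin d) (Fin d) ℝ × ((Fin n → Fin d) → (Fin m → Fin d) → ℝ) → ℝ)
    (g : Matrix (Fin d) (Fin d) ℝ) (T : (Fin n → Fin d) → (Fin m → Fin d) → ℝ)
    (hid : ∀ μ ν : Fin d,
      (∑ β, fderiv ℝ S (g, T) (Matrix.single μ β 1, 0) * g ν β)
      + (∑ β, fderiv ℝ S (g, T) (Matrix.single β μ 1, 0) * g β ν)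
      - (∑ j : Fin n, ∑ ξ : Fin n → Fin d, ∑ η : Fin m → Fin d,
          if ξ j = ν then
            fderiv ℝ S (g, T) (0, fun ξ' η' => if ξ' = ξ ∧ η' = η then 1 else 0)
              * T (Function.update ξ j μ) η
          else 0)
      + (∑ k : Fin m, ∑ ξ : Fin n → Fin d, ∑ η : Fin m → Fin d,
          if η k = μ then
            fderiv ℝ S (g, T) (0, fun ξ' η' => if ξ' = ξ ∧ η' = η then 1 else 0)
              * T ξ (Function.update η k ν)
          else 0) = 0) :
    2 * ∑ α, ∑ β, fderiv ℝ S (g, T) (Matrix.single α β 1, 0) * g α β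
      = ((n : ℝ) - (m : ℝ)) * ∑ ξ : Fin n → Fin d, ∑ η : Fin m → Fin d,
          fderiv ℝ S (g, T) (0, fun ξ' η' => if ξ' = ξ ∧ η' = η then 1 else 0) * T ξ η := by
  have htrace := sum_eq_zero fun μ (_ : μ ∈ univ) => hid μ μ
  rw [sum_add_distrib, sum_sub_distrib, sum_sum_mul_add_sum_sum_mul_swap _ g,
    sum_sum_ite_update_left, sum_sum_ite_update_right, Fintype.card_fin, Fintype.card_fin]
    at htrace
  linarith

/-- the trace (Eq. (5)) of the tensor identity (Eq. (4)) for a scalar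
built from the metric `g` and an `(n,m)`-tensor `T`. -/
theorem trace_of_tensor_identity (d n m : ℕ) (hd : 1 ≤ d) (hn : 1 ≤ n) (hm : 1 ≤ m)
    (S : Matrix (Fin d) (Fin d) ℝ × ((Fin n → Fin d) → (Fin m → Fin d) → ℝ) → ℝ)
    (g : Matrix (Fin d) (Fin d) ℝ) (T : (Fin n → Fin d) → (Fin m → Fin d) → ℝ)
    (hdiff : DifferentiableAt ℝ S (g, T))
    (hid : ∀ μ ν : Fin d,
      (∑ β, fderiv ℝ S (g, T) (Matrix.single μ β 1, 0) * g ν β)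
      + (∑ β, fderiv ℝ S (g, T) (Matrix.single β μ 1, 0) * g β ν)
      - (∑ j : Fin n, ∑ ξ : Fin n → Fin d, ∑ η : Fin m → Fin d,
          if ξ j = ν then
            fderiv ℝ S (g, T) (0, fun ξ' η' => if ξ' = ξ ∧ η' = η then 1 else 0)
              * T (Function.update ξ j μ) η
          else 0)
      + (∑ k : Fin m, ∑ ξ : Fin n → Fin d, ∑ η : Fin m → Fin d,
          if η k = μ then
            fderiv ℝ S (g, T) (0, fun ξ' η' => if ξ' = ξ ∧ η' = η then 1 else 0)
              * T ξ (Function.update η k ν)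
          else 0) = 0) :
    2 * ∑ α, ∑ β, fderiv ℝ S (g, T) (Matrix.single α β 1, 0) * g α β
      = ((n : ℝ) - (m : ℝ)) * ∑ ξ : Fin n → Fin d, ∑ η : Fin m → Fin d,
          fderiv ℝ S (g, T) (0, fun ξ' η' => if ξ' = ξ ∧ η' = η then 1 else 0) * T ξ η :=
  trace_of_tensor_identity_general d n m S g T hid
end

section
/- Let d, n, m ≥ 1, w : ℕ, and let S : Matrix (Fin d) (Fin d) ℝ × ((Fin n → Fin d) → (Fin m → Fin d) → ℝ) → ℝ be differentiable at a point (g, T) with det g < 0. Assume that for all μ, ν ∈ Fin d the identity ∑_{β} (∂S/∂g_{(μ,β)}) · g ν β + ∑_{β} (∂S/∂g_{(β,μ)}) · g β ν − ∑_{j ∈ Fin n} ∑_{ξ, η with ξ j = ν} (∂S/∂T_{(ξ,η)}) · T (Function.update ξ j μ) η + ∑_{k ∈ Fin m} ∑_{ξ, η with η k = μ} (∂S/∂T_{(ξ,η)}) · T ξ (Function.update η k ν) = 0 holds at (g, T). Define the relative scalar of weight w by S̃(g', T') = S(g', T') · (Real.sqrt (−det g'))^w. Then S̃ is differentiable at (g,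 T) and for all μ, ν ∈ Fin d: ∑_{β} (∂S̃/∂g_{(μ,β)}) · g ν β + ∑_{β} (∂S̃/∂g_{(β,μ)}) · g β ν − ∑_{j} ∑_{ξ, η, ξ j = ν} (∂S̃/∂T_{(ξ,η)}) · T (Function.update ξ j μ) η + ∑_{k} ∑_{ξ, η, η k = μ} (∂S̃/∂T_{(ξ,η)}) · T ξ (Function.update η k ν) = w · (if μ = ν then 1 else 0) · S̃(g, T). -/
/-!
Write `S̃ = S · φ` with `φ (g, T) = √(-det g) ^ w`. The left-hand side of the identity is linear
in the differential and equals its value on one tangent vector `V` at `(g, T)`, the generator of an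
infinitesimal change of coordinates; the hypothesis says `dS (V) = 0`. By the product rule only
`S · dφ (V)` survives. Jacobi's formula `d(det)_g (A) = tr (A · adj g)` applied to the metric
component `E_μν g + g E_νμ` of `V` gives `2 det g δ^μ_ν`, and `d/dt (√(-t) ^ w) = w / (2t) · √(-t) ^ w`
turns this into `dφ (V) = w δ^μ_ν φ (g, T)`.
-/

attribute [local instance] Matrix.normedAddCommGroup Matrix.normedSpace

open Finset

namespace Matrix

section Semiring

variable {R ι : Type*} [Semiring R] [Fintype ι] [DecidableEq ι]

theorem single_one_mul_eq_sum (g : Matrix ι ι R) (μ ν : ι) :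
    single μ ν 1 * g = ∑ β, g ν β • single μ β 1 := by
  ext a b
  simp [mul_apply, single_apply, Matrix.sum_apply, ite_and]

theorem mul_single_one_eq_sum (g : Matrix ι ι R) (μ ν : ι) :
    g * single ν μ 1 = ∑ β, g β ν • single β μ 1 := by
  ext a b
  simp [mul_apply, single_apply, Matrix.sum_apply, ite_and]

end Semiring

section CommRing

variable {R ι : Type*} [CommRing R] [Fintype ι] [DecidableEq ι]

theorem det_updateRow_eq_sum_mul_adjugate (g : Matrix ι ι R) (i : ι) (v : ι → R) :
    (g.updateRow i v).det = ∑ j, v j * g.adjugate j i := by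
  rw [← cramer_transpose_apply, cramer_eq_adjugate_mulVec, ← adjugate_transpose]
  simp [mulVec, dotProduct, mul_comm]

theorem trace_single_mul_add_mul_single_mul_adjugate (g : Matrix ι ι R) (μ ν : ι) :
    trace ((single μ ν 1 * g + g * single ν μ 1) * adjugate g)
      = 2 * det g * if μ = ν then 1 else 0 := by
  rw [add_mul, trace_add, Matrix.mul_assoc, trace_single_mul, trace_mul_comm, ← Matrix.mul_assoc,
    trace_mul_single, mul_adjugate, adjugate_mul]
  by_cases h : μ = ν
  · subst h; simp [two_mul]
  · simp [h, Ne.symm h]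

end CommRing

variable {𝕜 ι : Type*} [NontriviallyNormedField 𝕜] [Fintype ι] [DecidableEq ι]

noncomputable def detRowContinuousMultilinearMap :
    ContinuousMultilinearMap 𝕜 (fun _ : ι => ι → 𝕜) 𝕜 :=
  { (detRowAlternating : AlternatingMap 𝕜 (ι → 𝕜) 𝕜 ι).toMultilinearMap with
    cont := continuous_id.matrix_det }

noncomputable def detFDeriv (g : Matrix ι ι 𝕜) : Matrix ι ι 𝕜 →L[𝕜] 𝕜 :=
  detRowContinuousMultilinearMap.linearDeriv g

theorem hasFDerivAt_det (g : Matrix ι ι 𝕜) : HasFDerivAt det (detFDeriv g) g :=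
  detRowContinuousMultilinearMap.hasFDerivAt g

theorem detFDeriv_apply (g A : Matrix ι ι 𝕜) : detFDeriv g A = trace (A * adjugate g) := by
  refine (ContinuousMultilinearMap.linearDeriv_apply _ _ _).trans ?_
  simp only [trace, diag, mul_apply]
  exact Finset.sum_congr rfl fun i _ => det_updateRow_eq_sum_mul_adjugate g i (A i)

end Matrix

theorem hasDerivAt_sqrt_neg_pow {t : ℝ} (ht : t < 0) (w : ℕ) :
    HasDerivAt (fun t => √(-t) ^ w) (w / (2 * t) * √(-t) ^ w) t := by
  have hsq : √(-t) ^ 2 = -t := Real.sq_sqrt (by linarith)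
  have hs : √(-t) ≠ 0 := (Real.sqrt_pos.2 (by linarith)).ne'
  have hsqrt : HasDerivAt (fun t => √(-t)) (-1 / (2 * √(-t))) t :=
    (hasDerivAt_id' t).neg.sqrt (by simpa using ht.ne)
  refine (hsqrt.pow w).congr_deriv ?_
  rcases w with _ | k
  · simp
  · simp only [pow_succ, Nat.cast_add, Nat.cast_one, add_tsub_cancel_right]
    field_simp
    rw [hsq, neg_div, div_self ht.ne]

theorem hasFDerivAt_sqrt_neg_det_pow {ι : Type*} [Fintype ι] [DecidableEq ι]
    {g : Matrix ι ι ℝ} (hdet : g.det < 0) (w : ℕ) :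
    HasFDerivAt (fun A : Matrix ι ι ℝ => √(-A.det) ^ w)
      ((w / (2 * g.det) * √(-g.det) ^ w) • Matrix.detFDeriv g) g :=
  (hasDerivAt_sqrt_neg_pow hdet w).comp_hasFDerivAt (h₂ := fun t => √(-t) ^ w) g
    (Matrix.hasFDerivAt_det g)

open Matrix

section Tensor

variable {X ι κ : Type*} [Fintype X] [DecidableEq X] [Fintype ι] [DecidableEq ι]
  [Fintype κ] [DecidableEq κ]

/-- The tangent vector at `(g, T)` of the infinitesimal change of coordinates `A = 1 + ε E_νμ`
(its metric component is the first-order term of `Aᵀ g A`). By `apply_glGenerator`, Eq. (4) reads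
`dS (glGenerator g T μ ν) = 0`. -/
noncomputable def glGenerator (g : Matrix X X ℝ) (T : (ι → X) → (κ → X) → ℝ) (μ ν : X) :
    Matrix X X ℝ × ((ι → X) → (κ → X) → ℝ) :=
  (single μ ν 1 * g + g * single ν μ 1,
    (∑ k, ∑ ξ, ∑ η, (if η k = μ then T ξ (Function.update η k ν) else 0) •
        fun ξ' η' => if ξ' = ξ ∧ η' = η then 1 else 0)
      - ∑ j, ∑ ξ, ∑ η, (if ξ j = ν then T (Function.update ξ j μ) η else 0) •
        fun ξ' η' => if ξ' = ξ ∧ η' = η then 1 else 0)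

@[simp]
theorem glGenerator_fst (g : Matrix X X ℝ) (T : (ι → X) → (κ → X) → ℝ) (μ ν : X) :
    (glGenerator g T μ ν).1 = single μ ν 1 * g + g * single ν μ 1 := rfl

theorem apply_glGenerator (D : Matrix X X ℝ × ((ι → X) → (κ → X) → ℝ) →L[ℝ] ℝ)
    (g : Matrix X X ℝ) (T : (ι → X) → (κ → X) → ℝ) (μ ν : X) :
    D (glGenerator g T μ ν) =
      (∑ β, D (single μ β 1, 0) * g ν β)
      + (∑ β, D (single β μ 1, 0) * g β ν)
      - (∑ j, ∑ ξ : ι → X, ∑ η : κ → X,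
          if ξ j = ν then
            D (0, fun ξ' η' => if ξ' = ξ ∧ η' = η then 1 else 0) * T (Function.update ξ j μ) η
          else 0)
      + (∑ k, ∑ ξ : ι → X, ∑ η : κ → X,
          if η k = μ then
            D (0, fun ξ' η' => if ξ' = ξ ∧ η' = η then 1 else 0) * T ξ (Function.update η k ν)
          else 0) := by
  rw [← D.comp_inl_add_comp_inr, glGenerator, single_one_mul_eq_sum, mul_single_one_eq_sum]
  simp only [map_add, map_sub, map_sum, map_smul, smul_eq_mul, ContinuousLinearMap.comp_apply,
    ContinuousLinearMap.inl_apply, ContinuousLinearMap.inr_apply, ite_mul, zero_mul,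
    mul_comm (D _)]
  abel

end Tensor

theorem relative_scalar_tensor_identity_general (d n m : ℕ)
    (w : ℕ)
    (S : Matrix (Fin d) (Fin d) ℝ × ((Fin n → Fin d) → (Fin m → Fin d) → ℝ) → ℝ)
    (g : Matrix (Fin d) (Fin d) ℝ) (T : (Fin n → Fin d) → (Fin m → Fin d) → ℝ)
    (hdet : g.det < 0)
    (hdiff : DifferentiableAt ℝ S (g, T))
    (hid : ∀ μ ν : Fin d,
      (∑ β, fderiv ℝ S (g, T) (Matrix.single μ β 1, 0) * g ν β)
      + (∑ β, fderiv ℝ S (g, T) (Matrix.single β μ 1, 0) * g β ν)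
      - (∑ j : Fin n, ∑ ξ : Fin n → Fin d, ∑ η : Fin m → Fin d,
          if ξ j = ν then
            fderiv ℝ S (g, T) (0, fun ξ' η' => if ξ' = ξ ∧ η' = η then 1 else 0)
              * T (Function.update ξ j μ) η
          else 0)
      + (∑ k : Fin m, ∑ ξ : Fin n → Fin d, ∑ η : Fin m → Fin d,
          if η k = μ then
            fderiv ℝ S (g, T) (0, fun ξ' η' => if ξ' = ξ ∧ η' = η then 1 else 0)
              * T ξ (Function.update η k ν)
          else 0) = 0) :
    DifferentiableAt ℝ
      (fun p : Matrix (Fin d) (Fin d) ℝ × ((Fin n → Fin d) → (Fin m → Fin d) → ℝ) =>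
        S p * (Real.sqrt (-p.1.det)) ^ w) (g, T) ∧
    ∀ μ ν : Fin d,
      (∑ β, fderiv ℝ
          (fun p : Matrix (Fin d) (Fin d) ℝ × ((Fin n → Fin d) → (Fin m → Fin d) → ℝ) =>
            S p * (Real.sqrt (-p.1.det)) ^ w) (g, T)
          (Matrix.single μ β 1, 0) * g ν β)
      + (∑ β, fderiv ℝ
          (fun p : Matrix (Fin d) (Fin d) ℝ × ((Fin n → Fin d) → (Fin m → Fin d) → ℝ) =>
            S p * (Real.sqrt (-p.1.det)) ^ w) (g, T)
          (Matrix.single β μ 1, 0) * g β ν)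
      - (∑ j : Fin n, ∑ ξ : Fin n → Fin d, ∑ η : Fin m → Fin d,
          if ξ j = ν then
            fderiv ℝ
              (fun p : Matrix (Fin d) (Fin d) ℝ × ((Fin n → Fin d) → (Fin m → Fin d) → ℝ) =>
                S p * (Real.sqrt (-p.1.det)) ^ w) (g, T)
              (0, fun ξ' η' => if ξ' = ξ ∧ η' = η then 1 else 0)
              * T (Function.update ξ j μ) η
          else 0)
      + (∑ k : Fin m, ∑ ξ : Fin n → Fin d, ∑ η : Fin m → Fin d,
          if η k = μ then
            fderiv ℝ
              (fun p : Matrix (Fin d) (Fin d) ℝ × ((Fin n → Fin d) → (Fin m → Fin d) → ℝ) =>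
                S p * (Real.sqrt (-p.1.det)) ^ w) (g, T)
              (0, fun ξ' η' => if ξ' = ξ ∧ η' = η then 1 else 0)
              * T ξ (Function.update η k ν)
          else 0)
      = (w : ℝ) * (if μ = ν then 1 else 0) * (S (g, T) * (Real.sqrt (-g.det)) ^ w) := by
  have hweight : HasFDerivAt
      (fun p : Matrix (Fin d) (Fin d) ℝ × ((Fin n → Fin d) → (Fin m → Fin d) → ℝ) =>
        √(-p.1.det) ^ w) _ (g, T) :=
    (hasFDerivAt_sqrt_neg_det_pow hdet w).comp (f := Prod.fst) (g, T) hasFDerivAt_fst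
  have hrel : HasFDerivAt
      (fun p : Matrix (Fin d) (Fin d) ℝ × ((Fin n → Fin d) → (Fin m → Fin d) → ℝ) =>
        S p * √(-p.1.det) ^ w) _ (g, T) := hdiff.hasFDerivAt.mul hweight
  refine ⟨hrel.differentiableAt, fun μ ν => ?_⟩
  have hS := hid μ ν
  rw [← apply_glGenerator] at hS ⊢
  have hrel_apply : ∀ v, fderiv ℝ
      (fun p : Matrix (Fin d) (Fin d) ℝ × ((Fin n → Fin d) → (Fin m → Fin d) → ℝ) =>
        S p * √(-p.1.det) ^ w) (g, T) v
      = S (g, T) * (w / (2 * g.det) * √(-g.det) ^ w * detFDeriv g v.1)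
        + √(-g.det) ^ w * fderiv ℝ S (g, T) v := fun v => by
    rw [hrel.fderiv]; rfl
  rw [hrel_apply, hS, glGenerator_fst, detFDeriv_apply, trace_single_mul_add_mul_single_mul_adjugate]
  field_simp [hdet.ne]
  ring

/-- the tensor identity (Eq. (4)) for an absolute scalar `S` extends to the
relative scalar `S̃ = S · (√(-det g))^w` of weight `w`, with the extra term
`w · δ^μ_ν · S̃` on the right-hand side (Eq. (6)). -/
theorem relative_scalar_tensor_identity (d n m : ℕ) (hd : 1 ≤ d) (hn : 1 ≤ n) (hm : 1 ≤ m)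
    (w : ℕ)
    (S : Matrix (Fin d) (Fin d) ℝ × ((Fin n → Fin d) → (Fin m → Fin d) → ℝ) → ℝ)
    (g : Matrix (Fin d) (Fin d) ℝ) (T : (Fin n → Fin d) → (Fin m → Fin d) → ℝ)
    (hdet : g.det < 0)
    (hdiff : DifferentiableAt ℝ S (g, T))
    (hid : ∀ μ ν : Fin d,
      (∑ β, fderiv ℝ S (g, T) (Matrix.single μ β 1, 0) * g ν β)
      + (∑ β, fderiv ℝ S (g, T) (Matrix.single β μ 1, 0) * g β ν)
      - (∑ j : Fin n, ∑ ξ : Fin n → Fin d, ∑ η : Fin m → Fin d,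
          if ξ j = ν then
            fderiv ℝ S (g, T) (0, fun ξ' η' => if ξ' = ξ ∧ η' = η then 1 else 0)
              * T (Function.update ξ j μ) η
          else 0)
      + (∑ k : Fin m, ∑ ξ : Fin n → Fin d, ∑ η : Fin m → Fin d,
          if η k = μ then
            fderiv ℝ S (g, T) (0, fun ξ' η' => if ξ' = ξ ∧ η' = η then 1 else 0)
              * T ξ (Function.update η k ν)
          else 0) = 0) :
    DifferentiableAt ℝ
      (fun p : Matrix (Fin d) (Fin d) ℝ × ((Fin n → Fin d) → (Fin m → Fin d) → ℝ) =>
        S p * (Real.sqrt (-p.1.det)) ^ w) (g, T) ∧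
    ∀ μ ν : Fin d,
      (∑ β, fderiv ℝ
          (fun p : Matrix (Fin d) (Fin d) ℝ × ((Fin n → Fin d) → (Fin m → Fin d) → ℝ) =>
            S p * (Real.sqrt (-p.1.det)) ^ w) (g, T)
          (Matrix.single μ β 1, 0) * g ν β)
      + (∑ β, fderiv ℝ
          (fun p : Matrix (Fin d) (Fin d) ℝ × ((Fin n → Fin d) → (Fin m → Fin d) → ℝ) =>
            S p * (Real.sqrt (-p.1.det)) ^ w) (g, T)
          (Matrix.single β μ 1, 0) * g β ν)
      - (∑ j : Fin n, ∑ ξ : Fin n → Fin d, ∑ η : Fin m → Fin d,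
          if ξ j = ν then
            fderiv ℝ
              (fun p : Matrix (Fin d) (Fin d) ℝ × ((Fin n → Fin d) → (Fin m → Fin d) → ℝ) =>
                S p * (Real.sqrt (-p.1.det)) ^ w) (g, T)
              (0, fun ξ' η' => if ξ' = ξ ∧ η' = η then 1 else 0)
              * T (Function.update ξ j μ) η
          else 0)
      + (∑ k : Fin m, ∑ ξ : Fin n → Fin d, ∑ η : Fin m → Fin d,
          if η k = μ then
            fderiv ℝ
              (fun p : Matrix (Fin d) (Fin d) ℝ × ((Fin n → Fin d) → (Fin m → Fin d) → ℝ) =>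
                S p * (Real.sqrt (-p.1.det)) ^ w) (g, T)
              (0, fun ξ' η' => if ξ' = ξ ∧ η' = η then 1 else 0)
              * T ξ (Function.update η k ν)
          else 0)
      = (w : ℝ) * (if μ = ν then 1 else 0) * (S (g, T) * (Real.sqrt (-g.det)) ^ w) :=
  relative_scalar_tensor_identity_general d n m w S g T hdet hdiff hid
end

section
/- Let d ≥ 1, let A, B : Fin d → Fin d → Fin d → ℝ and C : Fin d → ℝ, and define S(A, B, C) = ∑_{α,β,ξ,η} A α β ξ · B α ξ η · C β · C η (the complete contraction S = A^{αβ}_ξ B_α^{ξη} C_β C_η). Then for all μ, ν ∈ Fin d: −∑_{β,ξ} (∂S/∂A_{(ν,β,ξ)}) · A μ β ξ − ∑_{α,ξ} (∂S/∂A_{(α,ν,ξ)}) · A α μ ξ + ∑_{α,β} (∂S/∂A_{(α,β,μ)}) · A α β ν − ∑_{α,η} (∂S/∂B_{(α,ν,η)}) · B α μ η − ∑_{α,ξ} (∂S/∂B_{(α,ξ,ν)}) · B α ξ μ + ∑_{ξ,η} (∂S/∂B_{(μ,ξ,η)}) · B ν ξ η + (∂S/∂C_μ) · C ν = 0, where all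 partial derivatives are taken at (A, B, C). -/
/-!
Each contracted index pair of `S = A^{αβ}_ξ B_α^{ξη} C_β C_η` occurs once as an upper and once
as a lower index, so in the identity it produces two terms of opposite sign which agree after
reordering the summation; this is the infinitesimal form of the `GL(d)`-invariance of a complete
contraction. The derivative in `C` yields two terms, one for each of `C_β` and `C_η`, so the
seven terms of the identity cancel in four pairs.
-/

open Finset

abbrev TensorTriple (d : ℕ) :=
  (Fin d → Fin d → Fin d → ℝ) × (Fin d → Fin d → Fin d → ℝ) × (Fin d → ℝ)

def fullContraction {d : ℕ} (x : TensorTriple d) : ℝ :=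
  ∑ α, ∑ β, ∑ ξ, ∑ η, x.1 α β ξ * x.2.1 α ξ η * x.2.2 β * x.2.2 η

section
variable {d : ℕ}

theorem fderiv_fullContraction_apply (x v : TensorTriple d) :
    fderiv ℝ fullContraction x v =
      ∑ α, ∑ β, ∑ ξ, ∑ η,
        (v.1 α β ξ * x.2.1 α ξ η * x.2.2 β * x.2.2 η + x.1 α β ξ * v.2.1 α ξ η * x.2.2 β * x.2.2 η
          + x.1 α β ξ * x.2.1 α ξ η * v.2.2 β * x.2.2 η
          + x.1 α β ξ * x.2.1 α ξ η * x.2.2 β * v.2.2 η) := by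
  unfold fullContraction
  simp (disch := fun_prop) [fderiv_fun_sum, fderiv_fun_mul, fderiv_apply, fderiv.fst, fderiv.snd]
  refine sum_congr rfl fun α _ => sum_congr rfl fun β _ => sum_congr rfl fun ξ _ =>
    sum_congr rfl fun η _ => ?_
  ring

variable (A B : Fin d → Fin d → Fin d → ℝ) (C : Fin d → ℝ)

theorem fderiv_fullContraction_basisA (a b c : Fin d) :
    fderiv ℝ fullContraction (A, B, C)
        ((fun α β ξ => if α = a ∧ β = b ∧ ξ = c then 1 else 0), 0, 0) =
      ∑ η, B a c η * C b * C η := by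
  simp [fderiv_fullContraction_apply, ite_and]

theorem fderiv_fullContraction_basisB (a c e : Fin d) :
    fderiv ℝ fullContraction (A, B, C)
        (0, (fun α ξ η => if α = a ∧ ξ = c ∧ η = e then 1 else 0), 0) =
      ∑ β, A a β c * C β * C e := by
  simp [fderiv_fullContraction_apply, ite_and]

theorem fderiv_fullContraction_basisC (b : Fin d) :
    fderiv ℝ fullContraction (A, B, C) (0, 0, Pi.single b 1) =
      ∑ α, ∑ ξ, ∑ η, A α b ξ * B α ξ η * C η + ∑ α, ∑ β, ∑ ξ, A α β ξ * B α ξ b * C β := by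
  simp [fderiv_fullContraction_apply, Pi.single_apply, sum_add_distrib]

end

theorem tensor_identity_example_general (d : ℕ)
    (A B : Fin d → Fin d → Fin d → ℝ) (C : Fin d → ℝ)
    (S : (Fin d → Fin d → Fin d → ℝ) × (Fin d → Fin d → Fin d → ℝ) × (Fin d → ℝ) → ℝ)
    (hS : S = fun x => ∑ α, ∑ β, ∑ ξ, ∑ η, x.1 α β ξ * x.2.1 α ξ η * x.2.2 β * x.2.2 η) :
    ∀ μ ν : Fin d,
      -(∑ β, ∑ ξ, fderiv ℝ S (A, B, C)
          ((fun a b c => if a = ν ∧ b = β ∧ c = ξ then 1 else 0), 0, 0) * A μ β ξ)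
      - (∑ α, ∑ ξ, fderiv ℝ S (A, B, C)
          ((fun a b c => if a = α ∧ b = ν ∧ c = ξ then 1 else 0), 0, 0) * A α μ ξ)
      + (∑ α, ∑ β, fderiv ℝ S (A, B, C)
          ((fun a b c => if a = α ∧ b = β ∧ c = μ then 1 else 0), 0, 0) * A α β ν)
      - (∑ α, ∑ η, fderiv ℝ S (A, B, C)
          (0, (fun a b c => if a = α ∧ b = ν ∧ c = η then 1 else 0), 0) * B α μ η)
      - (∑ α, ∑ ξ, fderiv ℝ S (A, B, C)
          (0, (fun a b c => if a = α ∧ b = ξ ∧ c = ν then 1 else 0), 0) * B α ξ μ)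
      + (∑ ξ, ∑ η, fderiv ℝ S (A, B, C)
          (0, (fun a b c => if a = μ ∧ b = ξ ∧ c = η then 1 else 0), 0) * B ν ξ η)
      + fderiv ℝ S (A, B, C) (0, 0, Pi.single μ 1) * C ν
      = 0 := by
  intro μ ν
  obtain rfl : S = fullContraction := hS
  simp only [fderiv_fullContraction_basisA, fderiv_fullContraction_basisB,
    fderiv_fullContraction_basisC, sum_mul, add_mul]
  -- reorder the sums of the sixth, fourth and fifth terms to match those of their partners:
  -- the first, the third and the second half of the last term
  rw [sum_comm_cycle (f := fun ξ η β => A μ β ξ * C β * C η * B ν ξ η),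
    sum_congr rfl fun α _ => sum_comm (f := fun η β => A α β ν * C β * C η * B α μ η),
    sum_congr rfl fun α _ => sum_comm (f := fun ξ β => A α β ξ * C β * C ν * B α ξ μ)]
  simp only [mul_comm, mul_left_comm]
  ring

/-- the worked example (Eq. (3)) of the tensor identity for the scalar
`S = A^{αβ}_ξ B_α^{ξη} C_β C_η` built by contracting a tensor product of lower-rank
tensors. -/
theorem tensor_identity_example (d : ℕ) (hd : 1 ≤ d)
    (A B : Fin d → Fin d → Fin d → ℝ) (C : Fin d → ℝ)
    (S : (Fin d → Fin d → Fin d → ℝ) × (Fin d → Fin d → Fin d → ℝ) × (Fin d → ℝ) → ℝ)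
    (hS : S = fun x => ∑ α, ∑ β, ∑ ξ, ∑ η, x.1 α β ξ * x.2.1 α ξ η * x.2.2 β * x.2.2 η) :
    ∀ μ ν : Fin d,
      -(∑ β, ∑ ξ, fderiv ℝ S (A, B, C)
          ((fun a b c => if a = ν ∧ b = β ∧ c = ξ then 1 else 0), 0, 0) * A μ β ξ)
      - (∑ α, ∑ ξ, fderiv ℝ S (A, B, C)
          ((fun a b c => if a = α ∧ b = ν ∧ c = ξ then 1 else 0), 0, 0) * A α μ ξ)
      + (∑ α, ∑ β, fderiv ℝ S (A, B, C)
          ((fun a b c => if a = α ∧ b = β ∧ c = μ then 1 else 0), 0, 0) * A α β ν)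
      - (∑ α, ∑ η, fderiv ℝ S (A, B, C)
          (0, (fun a b c => if a = α ∧ b = ν ∧ c = η then 1 else 0), 0) * B α μ η)
      - (∑ α, ∑ ξ, fderiv ℝ S (A, B, C)
          (0, (fun a b c => if a = α ∧ b = ξ ∧ c = ν then 1 else 0), 0) * B α ξ μ)
      + (∑ ξ, ∑ η, fderiv ℝ S (A, B, C)
          (0, (fun a b c => if a = μ ∧ b = ξ ∧ c = η then 1 else 0), 0) * B ν ξ η)
      + fderiv ℝ S (A, B, C) (0, 0, Pi.single μ 1) * C ν
      = 0 :=
  tensor_identity_example_general d A B C S hS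
end

section
/- Let G : Matrix (Fin 4) (Fin 4) ℝ be symmetric with det G < 0 (the contravariant metric g^{αβ}), let m : ℝ, and let φ, φ̄ : ℂ and p, p̄ : Fin 4 → ℂ (the scalar field, its conjugate field, and their derivatives ∂φ/∂x^α, ∂φ̄/∂x^α, all treated as independent variables). Define the Klein-Gordon Lagrangian density L̃(p̄, p, G) = ( (1/2) ∑_{α,β} (p̄ α · p β + p̄ β · p α) · (G α β : ℂ) − (m^2 : ℂ) · φ̄ · φ ) · ((−det G)^{−1/2} : ℂ). Then for all μ, ν ∈ Fin 4 the metric and canonical energy-momentum tensor densities coincide: ∑_{β} (∂L̃/∂G_{(ν,β)}) · (G μ β : ℂ) + ∑_{α} (∂L̃/∂G_{(α,ν)}) · (G α μ : ℂ) = p̄ ν · (∂L̃/∂p̄_μ) + (∂L̃/∂p_μ) · p ν − (if μ = ν then L̃(p̄, p, G) else 0), where ∂L̃/∂G_{(ν,β)} denotes the real Fréchet partial derivative in the matrix slot (a complex number) and ∂L̃/∂p_μ, ∂L̃/∂p̄_μ the complex Fréchet partial derivatives in the field-derivative slots. -/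
/-!
Only the density `(-det g)^(-1/2)` and the kinetic term of `L̃` depend on `g^{αβ}`.
By Jacobi's formula `∂ det g / ∂g^{νβ} = adj(g)_{βν}` and `g · adj g = adj g · g = det g · 1`,
each of the two contractions in `T̃^μ_ν` turns the derivative of the density into
`-½ δ^μ_ν (-det g)^(-1/2)`, so together they produce the term `-δ^μ_ν L̃` of `θ̃^μ_ν`.
The kinetic term is linear in `g^{αβ}`; its two contractions give
`p̄_ν (g p)^μ + (g p̄)^μ p_ν`, which, `g` being symmetric, is what the derivatives
in `p̄_μ` and `p_μ` produce.
-/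

attribute [local instance] Matrix.normedAddCommGroup Matrix.normedSpace

open Finset Matrix

namespace Matrix

variable {n : Type*} [Fintype n] [DecidableEq n]

theorem det_add_smul_single {R : Type*} [CommRing R] (A : Matrix n n R) (i j : n) (t : R) :
    (A + t • single i j 1).det = A.det + t * A.adjugate j i := by
  have hrow : A + t • single i j 1 = A.updateRow i (A i + t • Pi.single j 1) := by
    ext a b
    by_cases ha : a = i
    · subst ha
      by_cases hb : b = j
      · simp [hb]
      · simp [hb, Ne.symm hb]
    · simp [ha, Ne.symm ha]
  rw [hrow, det_updateRow_add, updateRow_eq_self, det_updateRow_smul, adjugate_apply]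

theorem differentiable_det {𝕜 : Type*} [NontriviallyNormedField 𝕜] :
    Differentiable 𝕜 (det : Matrix n n 𝕜 → 𝕜) := by
  rw [show (det : Matrix n n 𝕜 → 𝕜) = fun M => ∑ σ : Equiv.Perm n, Equiv.Perm.sign σ • ∏ i, M (σ i) i
    from funext det_apply]
  fun_prop

theorem fderiv_det_single {𝕜 : Type*} [NontriviallyNormedField 𝕜] (A : Matrix n n 𝕜) (i j : n) :
    fderiv 𝕜 det A (single i j 1) = A.adjugate j i := by
  refine differentiable_det.differentiableAt.lineDeriv_eq_fderiv.symm.trans ?_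
  simp only [lineDeriv, det_add_smul_single]
  simp

theorem hasFDerivAt_ofReal_neg_det_rpow {A : Matrix n n ℝ} (hA : A.det ≠ 0) (s : ℝ) :
    HasFDerivAt (fun M : Matrix n n ℝ => (((-M.det) ^ s : ℝ) : ℂ))
      (Complex.ofRealCLM.comp ((s * (-A.det) ^ (s - 1)) • -fderiv ℝ det A)) A :=
  Complex.ofRealCLM.hasFDerivAt.comp A
    ((differentiable_det A).hasFDerivAt.neg.rpow_const (Or.inl (neg_ne_zero.2 hA)))

theorem fderiv_ofReal_neg_det_rpow_single {A : Matrix n n ℝ} (hA : A.det ≠ 0) (s : ℝ) (i j : n) :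
    fderiv ℝ (fun M : Matrix n n ℝ => (((-M.det) ^ s : ℝ) : ℂ)) A (single i j 1)
      = ((s * (-A.det) ^ s / A.det * A.adjugate j i : ℝ) : ℂ) := by
  rw [(hasFDerivAt_ofReal_neg_det_rpow hA s).fderiv, ContinuousLinearMap.comp_apply,
    Complex.ofRealCLM_apply, _root_.smul_apply, _root_.neg_apply, fderiv_det_single, smul_eq_mul,
    Real.rpow_sub_one (neg_ne_zero.2 hA)]
  congr 1
  field_simp

end Matrix

section KineticForm

variable {n : Type*} [Fintype n]

noncomputable def kineticForm (M : Matrix n n ℝ) (u v : n → ℂ) : ℂ :=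
  (1 / 2) * ∑ α, ∑ β, (u α * v β + u β * v α) * (M α β : ℂ)

theorem kineticForm_comm (M : Matrix n n ℝ) (u v : n → ℂ) :
    kineticForm M u v = kineticForm M v u := by
  unfold kineticForm
  congr 1
  exact sum_congr rfl fun _ _ => sum_congr rfl fun _ _ => by ring

theorem kineticForm_single [DecidableEq n] (i j : n) (u v : n → ℂ) :
    kineticForm (single i j 1) u v = (u i * v j + u j * v i) / 2 := by
  simp only [kineticForm, single_apply, ite_and, apply_ite, Complex.ofReal_one,
    Complex.ofReal_zero, mul_one, mul_zero, sum_ite_irrel, sum_ite_eq, mem_univ, if_true,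
    sum_const_zero]
  ring

noncomputable def kineticFormLinearMap (u v : n → ℂ) : Matrix n n ℝ →ₗ[ℝ] ℂ where
  toFun M := kineticForm M u v
  map_add' M N := by
    simp only [kineticForm, Matrix.add_apply, Complex.ofReal_add, mul_add, sum_add_distrib]
  map_smul' c M := by
    simp only [kineticForm, Matrix.smul_apply, smul_eq_mul, Complex.ofReal_mul, mul_sum,
      RingHom.id_apply, Complex.real_smul]
    exact sum_congr rfl fun _ _ => sum_congr rfl fun _ _ => by ring

theorem differentiable_kineticForm_metric (u v : n → ℂ) :
    Differentiable ℝ (fun M : Matrix n n ℝ => kineticForm M u v) :=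
  (LinearMap.toContinuousLinearMap (kineticFormLinearMap u v)).differentiable

theorem fderiv_kineticForm_metric (u v : n → ℂ) (A E : Matrix n n ℝ) :
    fderiv ℝ (fun M : Matrix n n ℝ => kineticForm M u v) A E = kineticForm E u v :=
  congrArg (· E) (LinearMap.toContinuousLinearMap (kineticFormLinearMap u v)).fderiv

theorem differentiable_kineticForm_fst (M : Matrix n n ℝ) (v : n → ℂ) :
    Differentiable ℂ (fun u => kineticForm M u v) := by
  unfold kineticForm
  fun_prop

theorem differentiable_kineticForm_snd (M : Matrix n n ℝ) (u : n → ℂ) :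
    Differentiable ℂ (fun v => kineticForm M u v) := by
  simpa only [kineticForm_comm M u] using differentiable_kineticForm_fst M u

theorem fderiv_kineticForm_fst [DecidableEq n] {M : Matrix n n ℝ} (hM : M.IsSymm) (v x : n → ℂ)
    (μ : n) :
    fderiv ℂ (fun u => kineticForm M u v) x (Pi.single μ 1) = ∑ β, (M μ β : ℂ) * v β := by
  unfold kineticForm
  simp (disch := fun_prop) only [fderiv_const_mul, fderiv_fun_sum, fderiv_fun_add,
    fderiv_mul_const, fderiv_apply, fderiv_fun_id]
  simp only [ContinuousLinearMap.comp_id, smul_add, Complex.coe_smul, sum_add_distrib,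
    _root_.add_apply, _root_.smul_apply, _root_.sum_apply, ContinuousLinearMap.proj_apply,
    Pi.single_apply, smul_eq_mul, mul_ite, mul_one, mul_zero, smul_ite, Complex.real_smul,
    smul_zero, sum_ite_irrel, sum_const_zero, sum_ite_eq', mem_univ, if_true]
  have hcol : ∑ β, (M β μ : ℂ) * v β = ∑ β, (M μ β : ℂ) * v β :=
    sum_congr rfl fun β _ => by rw [hM.apply μ β]
  rw [hcol]
  ring

theorem fderiv_kineticForm_snd [DecidableEq n] {M : Matrix n n ℝ} (hM : M.IsSymm) (u x : n → ℂ)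
    (μ : n) :
    fderiv ℂ (fun v => kineticForm M u v) x (Pi.single μ 1) = ∑ β, (M μ β : ℂ) * u β := by
  simpa only [kineticForm_comm M u] using fderiv_kineticForm_fst hM u x μ

end KineticForm

section MetricEMT

variable {n : Type*} [Fintype n] [DecidableEq n]

noncomputable def metricEMT (L : Matrix n n ℝ → ℂ) (G : Matrix n n ℝ) (μ ν : n) : ℂ :=
  ∑ β, fderiv ℝ L G (single ν β 1) * G μ β + ∑ α, fderiv ℝ L G (single α ν 1) * G α μ

theorem metricEMT_mul {f g : Matrix n n ℝ → ℂ} {G : Matrix n n ℝ}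
    (hf : DifferentiableAt ℝ f G) (hg : DifferentiableAt ℝ g G) (μ ν : n) :
    metricEMT (fun M => f M * g M) G μ ν = f G * metricEMT g G μ ν + g G * metricEMT f G μ ν := by
  rw [metricEMT, show fderiv ℝ (fun M => f M * g M) G = f G • fderiv ℝ g G + g G • fderiv ℝ f G
    from fderiv_fun_mul hf hg]
  simp only [metricEMT, _root_.add_apply, _root_.smul_apply, smul_eq_mul, add_mul,
    sum_add_distrib, mul_add, mul_sum, mul_assoc]
  ring

theorem metricEMT_sub_const (f : Matrix n n ℝ → ℂ) (c : ℂ) (G : Matrix n n ℝ) (μ ν : n) :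
    metricEMT (fun M => f M - c) G μ ν = metricEMT f G μ ν := by
  rw [metricEMT, show fderiv ℝ (fun M => f M - c) G = fderiv ℝ f G from fderiv_sub_const c,
    metricEMT]

theorem metricEMT_ofReal_neg_det_rpow {G : Matrix n n ℝ} (hG : G.det ≠ 0) (s : ℝ) (μ ν : n) :
    metricEMT (fun M => (((-M.det) ^ s : ℝ) : ℂ)) G μ ν
      = if μ = ν then 2 * s * (((-G.det) ^ s : ℝ) : ℂ) else 0 := by
  have hright : ∑ β, G.adjugate β ν * G μ β = if μ = ν then G.det else 0 := by
    simpa [mul_apply, one_apply, mul_comm] using congrFun (congrFun (mul_adjugate G) μ) ν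
  have hleft : ∑ α, G.adjugate ν α * G α μ = if μ = ν then G.det else 0 := by
    simpa [mul_apply, one_apply, eq_comm] using congrFun (congrFun (adjugate_mul G) ν) μ
  simp only [metricEMT, fderiv_ofReal_neg_det_rpow_single hG, ← Complex.ofReal_mul,
    ← Complex.ofReal_sum, ← Complex.ofReal_add, mul_assoc, ← mul_sum, hright, hleft]
  split_ifs
  · have hG' : (G.det : ℂ) ≠ 0 := Complex.ofReal_ne_zero.2 hG
    push_cast
    field_simp
    ring
  · simp

theorem metricEMT_kineticForm {G : Matrix n n ℝ} (hG : G.IsSymm) (u v : n → ℂ) (μ ν : n) :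
    metricEMT (fun M => kineticForm M u v) G μ ν
      = u ν * ∑ β, (G μ β : ℂ) * v β + (∑ β, (G μ β : ℂ) * u β) * v ν := by
  simp only [metricEMT, fderiv_kineticForm_metric, kineticForm_single]
  calc _ = ∑ β, (u ν * ((G μ β : ℂ) * v β) + (G μ β : ℂ) * u β * v ν) := by
        rw [← sum_add_distrib]
        exact sum_congr rfl fun β _ => by rw [hG.apply μ β]; ring
    _ = _ := by rw [sum_add_distrib, mul_sum, sum_mul]

end MetricEMT

/-- for the Klein-Gordon Lagrangian density of a massive complex scalar
field, the metric and canonical energy-momentum tensor densities coincide (Eq. (12)). -/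
theorem kleinGordon_emt_identity
    (G : Matrix (Fin 4) (Fin 4) ℝ) (hG : G.IsSymm) (hdet : G.det < 0)
    (m : ℝ) (φ φbar : ℂ) (p pbar : Fin 4 → ℂ)
    (L : (Fin 4 → ℂ) → (Fin 4 → ℂ) → Matrix (Fin 4) (Fin 4) ℝ → ℂ)
    (hL : L = fun pb pp Gm =>
      ((1 / 2) * ∑ α, ∑ β, (pb α * pp β + pb β * pp α) * (Gm α β : ℂ)
        - (m ^ 2 : ℂ) * φbar * φ) * (((-Gm.det) ^ (-(1 / 2) : ℝ) : ℝ) : ℂ)) :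
    ∀ μ ν : Fin 4,
      (∑ β, fderiv ℝ (fun Gm => L pbar p Gm) G (Matrix.single ν β 1) * (G μ β : ℂ))
      + (∑ α, fderiv ℝ (fun Gm => L pbar p Gm) G (Matrix.single α ν 1) * (G α μ : ℂ))
      = pbar ν * fderiv ℂ (fun pb => L pb p G) pbar (Pi.single μ 1)
        + fderiv ℂ (fun pp => L pbar pp G) p (Pi.single μ 1) * p ν
        - (if μ = ν then L pbar p G else 0) := by
  intro μ ν
  replace hL : L = fun pb pp Gm => (kineticForm Gm pb pp - (m ^ 2 : ℂ) * φbar * φ)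
      * (((-Gm.det) ^ (-(1 / 2) : ℝ) : ℝ) : ℂ) := hL
  subst hL
  beta_reduce
  change metricEMT _ G μ ν = _
  have hρ := hasFDerivAt_ofReal_neg_det_rpow hdet.ne (-(1 / 2))
  rw [metricEMT_mul ((differentiable_kineticForm_metric pbar p).sub_const _).differentiableAt
      hρ.differentiableAt,
    metricEMT_sub_const, metricEMT_kineticForm hG, metricEMT_ofReal_neg_det_rpow hdet.ne,
    fderiv_mul_const ((differentiable_kineticForm_fst G p).sub_const _).differentiableAt,
    fderiv_mul_const ((differentiable_kineticForm_snd G pbar).sub_const _).differentiableAt,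
    fderiv_sub_const, fderiv_sub_const]
  simp only [_root_.smul_apply, smul_eq_mul, fderiv_kineticForm_fst hG, fderiv_kineticForm_snd hG]
  split_ifs <;> push_cast <;> ring
end

section
/- Let f, G : Matrix (Fin 4) (Fin 4) ℝ with det G < 0, a : Fin 4 → ℝ, m : ℝ, and define the Proca Lagrangian density L̃(f, a, G) = ( −(1/4) ∑_{α,β,ξ,η} f α β · f ξ η · G α ξ · G β η + (1/2) m^2 ∑_{α,β} a α · a β · G α β ) · (−det G)^{−1/2}. Then for all μ, ν ∈ Fin 4: −∑_{β} (∂L̃/∂G_{(ν,β)}) · G μ β − ∑_{β} (∂L̃/∂G_{(β,ν)}) · G β μ + ∑_{β} (∂L̃/∂f_{(μ,β)}) · f ν β + ∑_{β} (∂L̃/∂f_{(β,μ)}) · f β ν + (∂L̃/∂a_μ) · a ν = (if μ = ν then L̃(f, a, G) else 0), where all partial derivatives are Fréchet partial derivatives at (f, a, G). -/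
/-!
`L̃_P` is a relative scalar of weight one: for every `B` with `det B ≠ 0`,
`L̃ (Bᵀ f B, Bᵀ a, G) = |det B| · L̃ (f, a, B G Bᵀ)`. The kinetic and mass terms agree by
cyclicity of the trace, and `det (B G Bᵀ) = (det B)² det G` produces the factor `|det B|`.
Differentiating this along `B = 1 + t E` at `t = 0`, with `d/dt det (1 + t E) = tr E`, gives
`DL̃ (Eᵀ f + f E, Eᵀ a, -(E G + G Eᵀ)) = tr E · L̃`. The identity is the case
`E = single ν μ 1`, whose trace is `δ^μ_ν`.
-/

attribute [local instance] Matrix.normedAddCommGroup Matrix.normedSpace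

open Matrix

section Algebra

variable {n R : Type*} [Fintype n] [CommRing R]

theorem sum_mul_mul_mul_mul_eq_trace_mul (f G : Matrix n n R) :
    ∑ α, ∑ β, ∑ ξ, ∑ η, f α β * f ξ η * G α ξ * G β η
      = trace (fᵀ * G * f * Gᵀ) := by
  simp only [trace, diag, mul_apply, transpose_apply, Finset.sum_mul]
  rw [Finset.sum_comm]
  refine Finset.sum_congr rfl fun β _ => ?_
  conv_lhs => enter [2, α]; rw [Finset.sum_comm]
  rw [Finset.sum_comm]
  refine Finset.sum_congr rfl fun η _ => ?_
  rw [Finset.sum_comm]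
  exact Finset.sum_congr rfl fun ξ _ => Finset.sum_congr rfl fun α _ => by ring

theorem sum_mul_mul_eq_dotProduct_mulVec (a : n → R) (G : Matrix n n R) :
    ∑ α, ∑ β, a α * a β * G α β = a ⬝ᵥ (G *ᵥ a) := by
  simp only [dotProduct, mulVec, Finset.mul_sum]
  exact Finset.sum_congr rfl fun α _ => Finset.sum_congr rfl fun β _ => by ring

theorem trace_transpose_conj (f G B : Matrix n n R) :
    trace ((Bᵀ * f * B)ᵀ * G * (Bᵀ * f * B) * Gᵀ)
      = trace (fᵀ * (B * G * Bᵀ) * f * (B * G * Bᵀ)ᵀ) := by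
  simp only [transpose_mul, transpose_transpose, Matrix.mul_assoc]
  rw [trace_mul_comm]
  simp only [Matrix.mul_assoc]

theorem transpose_mulVec_dotProduct_mulVec (a : n → R) (G B : Matrix n n R) :
    (Bᵀ *ᵥ a) ⬝ᵥ (G *ᵥ (Bᵀ *ᵥ a)) = a ⬝ᵥ ((B * G * Bᵀ) *ᵥ a) := by
  rw [mulVec_mulVec, mulVec_transpose, ← dotProduct_mulVec, mulVec_mulVec, Matrix.mul_assoc]

variable [DecidableEq n]

theorem one_add_smul_mul_mul_one_add_smul (A M B : Matrix n n R) (t : R) :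
    (1 + t • A) * M * (1 + t • B) = M + t • (A * M + M * B) + t ^ 2 • (A * M * B) := by
  simp only [Matrix.add_mul, Matrix.mul_add, Matrix.one_mul, Matrix.mul_one, Matrix.smul_mul,
    Matrix.mul_smul, smul_smul, smul_add]
  module

theorem sum_map_single_mul_eq_map_single_mul (φ : Matrix n n R →ₗ[R] R) (i j : n)
    (M : Matrix n n R) :
    ∑ β, φ (single i β 1) * M j β = φ (single i j 1 * M) := by
  have hM : single i j 1 * M = ∑ β, M j β • single i β 1 := by
    ext k l
    simp [mul_apply, Matrix.sum_apply, single_apply, ite_and]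
  rw [hM, map_sum]
  exact Finset.sum_congr rfl fun β _ => by rw [map_smul, smul_eq_mul, mul_comm]

theorem sum_map_single_mul_eq_map_mul_single (φ : Matrix n n R →ₗ[R] R) (i j : n)
    (M : Matrix n n R) :
    ∑ β, φ (single β j 1) * M β i = φ (M * single i j 1) := by
  have hM : M * single i j 1 = ∑ β, M β i • single β j 1 := by
    ext k l
    simp [mul_apply, Matrix.sum_apply, single_apply, ite_and]
  rw [hM, map_sum]
  exact Finset.sum_congr rfl fun β _ => by rw [map_smul, smul_eq_mul, mul_comm]

end Algebra

section Calculus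

variable {n : Type*} [Fintype n] [DecidableEq n]

theorem hasDerivAt_add_smul_add_sq_smul {E : Type*} [NormedAddCommGroup E] [NormedSpace ℝ E]
    (x y z : E) : HasDerivAt (fun t : ℝ => x + t • y + t ^ 2 • z) y 0 := by
  simpa using (((hasDerivAt_id (0 : ℝ)).smul_const y).const_add x).fun_add
    ((hasDerivAt_pow 2 (0 : ℝ)).smul_const z)

theorem fderiv_apply_sub_eq_of_comp_eventuallyEq_mul {V : Type*} [NormedAddCommGroup V]
    [NormedSpace ℝ V] {F : V → ℝ} {p v₁ v₂ : V} {c₁ c₂ : ℝ → V} {w : ℝ → ℝ} {w' : ℝ}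
    (hF : DifferentiableAt ℝ F p) (hc₁ : HasDerivAt c₁ v₁ 0) (hc₂ : HasDerivAt c₂ v₂ 0)
    (hw : HasDerivAt w w' 0) (hc₁0 : c₁ 0 = p) (hc₂0 : c₂ 0 = p) (hw0 : w 0 = 1)
    (hFw : F ∘ c₁ =ᶠ[nhds 0] w * (F ∘ c₂)) :
    fderiv ℝ F p (v₁ - v₂) = w' * F p := by
  have hlhs := hF.hasFDerivAt.comp_hasDerivAt_of_eq 0 hc₁ hc₁0.symm
  have hrhs := hw.mul (hF.hasFDerivAt.comp_hasDerivAt_of_eq 0 hc₂ hc₂0.symm)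
  rw [map_sub, hlhs.unique (hrhs.congr_of_eventuallyEq hFw), Function.comp_apply, hc₂0, hw0,
    one_mul, add_sub_cancel_right]

theorem hasDerivAt_one_add_smul_mul_mul_one_add_smul (A M B : Matrix n n ℝ) :
    HasDerivAt (fun t : ℝ => (1 + t • A) * M * (1 + t • B)) (A * M + M * B) 0 := by
  simp only [one_add_smul_mul_mul_one_add_smul]
  exact hasDerivAt_add_smul_add_sq_smul _ _ _

open Polynomial in
theorem hasDerivAt_det_one_add_smul {𝕜 : Type*} [NontriviallyNormedField 𝕜]
    (E : Matrix n n 𝕜) : HasDerivAt (fun t : 𝕜 => (1 + t • E).det) (trace E) 0 := by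
  have hpoly : (fun t : 𝕜 => (1 + t • E).det)
      = fun t => (det (1 + (X : 𝕜[X]) • E.map C)).eval t := by
    funext t
    rw [eval_det]
    congr 1
    ext i j
    simp [one_apply, mul_comm]
  rw [hpoly, ← derivative_det_one_add_X_smul E]
  exact Polynomial.hasDerivAt _ 0

theorem rpow_neg_half_neg_det_conj (G B : Matrix n n ℝ) (hG : G.det ≤ 0) :
    (-(B * G * Bᵀ).det) ^ (-(1 / 2) : ℝ) = |B.det|⁻¹ * (-G.det) ^ (-(1 / 2) : ℝ) := by
  have hsq : -(B * G * Bᵀ).det = B.det ^ 2 * -G.det := by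
    rw [det_mul, det_mul, det_transpose]; ring
  rw [hsq, Real.mul_rpow (sq_nonneg _) (neg_nonneg.2 hG), Real.rpow_neg (sq_nonneg _),
    ← Real.sqrt_eq_rpow, Real.sqrt_sq_eq_abs]

end Calculus

section Proca

variable {n : Type*} [Fintype n] [DecidableEq n]

abbrev ProcaFields (n : Type*) := Matrix n n ℝ × (n → ℝ) × Matrix n n ℝ

noncomputable def procaLagrangian (m : ℝ) (x : ProcaFields n) : ℝ :=
  (-(1 / 4) * ∑ α, ∑ β, ∑ ξ, ∑ η, x.1 α β * x.1 ξ η * x.2.2 α ξ * x.2.2 β η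
      + (1 / 2) * m ^ 2 * ∑ α, ∑ β, x.2.1 α * x.2.1 β * x.2.2 α β)
    * (-x.2.2.det) ^ (-(1 / 2) : ℝ)

theorem procaLagrangian_eq_trace (m : ℝ) (f G : Matrix n n ℝ) (a : n → ℝ) :
    procaLagrangian m (f, a, G) =
      (-(1 / 4) * trace (fᵀ * G * f * Gᵀ) + (1 / 2) * m ^ 2 * (a ⬝ᵥ (G *ᵥ a)))
        * (-G.det) ^ (-(1 / 2) : ℝ) := by
  rw [procaLagrangian, sum_mul_mul_mul_mul_eq_trace_mul, sum_mul_mul_eq_dotProduct_mulVec]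

theorem procaLagrangian_transpose_conj (m : ℝ) (f G B : Matrix n n ℝ) (a : n → ℝ)
    (hG : G.det ≤ 0) (hB : B.det ≠ 0) :
    procaLagrangian m (Bᵀ * f * B, Bᵀ *ᵥ a, G)
      = |B.det| * procaLagrangian m (f, a, B * G * Bᵀ) := by
  rw [procaLagrangian_eq_trace, procaLagrangian_eq_trace, trace_transpose_conj,
    transpose_mulVec_dotProduct_mulVec, rpow_neg_half_neg_det_conj G B hG, mul_left_comm,
    mul_inv_cancel_left₀ (abs_ne_zero.2 hB)]

theorem differentiableAt_procaLagrangian (m : ℝ) {x : ProcaFields n}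
    (hx : x.2.2.det ≠ 0) : DifferentiableAt ℝ (procaLagrangian m) x := by
  have hdet : DifferentiableAt ℝ (fun y : ProcaFields n => y.2.2.det) x := by
    simp only [det_apply]
    fun_prop
  unfold procaLagrangian
  fun_prop (disch := exact Or.inl (neg_ne_zero.2 hx))

theorem fderiv_procaLagrangian_conj (m : ℝ) (f G E : Matrix n n ℝ) (a : n → ℝ)
    (hG : G.det < 0) :
    fderiv ℝ (procaLagrangian m) (f, a, G) (Eᵀ * f + f * E, Eᵀ *ᵥ a, -(E * G + G * Eᵀ))
      = trace E * procaLagrangian m (f, a, G) := by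
  have htranspose : ∀ t : ℝ, (1 + t • E)ᵀ = 1 + t • Eᵀ := fun t => by
    rw [transpose_add, transpose_one, transpose_smul]
  have hfields : HasDerivAt
      (fun t : ℝ => ((1 + t • E)ᵀ * f * (1 + t • E), (1 + t • E)ᵀ *ᵥ a, G))
      (Eᵀ * f + f * E, Eᵀ *ᵥ a, 0) 0 := by
    refine HasDerivAt.prodMk ?_ (HasDerivAt.prodMk ?_ (hasDerivAt_const _ G))
    · simp only [htranspose]
      exact hasDerivAt_one_add_smul_mul_mul_one_add_smul Eᵀ f E
    · simp only [htranspose, add_mulVec, one_mulVec, smul_mulVec]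
      simpa using ((hasDerivAt_id (0 : ℝ)).smul_const (Eᵀ *ᵥ a)).const_add a
  have hmetric : HasDerivAt (fun t : ℝ => (f, a, (1 + t • E) * G * (1 + t • E)ᵀ))
      (0, 0, E * G + G * Eᵀ) 0 := by
    refine (hasDerivAt_const _ f).prodMk ((hasDerivAt_const _ a).prodMk ?_)
    simp only [htranspose]
    exact hasDerivAt_one_add_smul_mul_mul_one_add_smul E G Eᵀ
  have hdet_pos : ∀ᶠ t in nhds (0 : ℝ), 0 < (1 + t • E).det :=
    (hasDerivAt_det_one_add_smul E).continuousAt.eventually (lt_mem_nhds (by simp))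
  have hdir : ((Eᵀ * f + f * E, Eᵀ *ᵥ a, -(E * G + G * Eᵀ)) : ProcaFields n)
      = (Eᵀ * f + f * E, Eᵀ *ᵥ a, 0) - (0, 0, E * G + G * Eᵀ) := by simp
  rw [hdir]
  refine fderiv_apply_sub_eq_of_comp_eventuallyEq_mul (differentiableAt_procaLagrangian m hG.ne)
    hfields hmetric (hasDerivAt_det_one_add_smul E) (by simp) (by simp) (by simp) ?_
  filter_upwards [hdet_pos] with t ht
  rw [Pi.mul_apply, Function.comp_apply, Function.comp_apply,
    procaLagrangian_transpose_conj m f G _ a hG.le ht.ne', abs_of_pos ht]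

end Proca

/-- the tensor identity (Eq. (13)) for the Proca Lagrangian density,
a relative scalar of weight 1. -/
theorem proca_identity
    (f G : Matrix (Fin 4) (Fin 4) ℝ) (hdet : G.det < 0)
    (a : Fin 4 → ℝ) (m : ℝ)
    (L : Matrix (Fin 4) (Fin 4) ℝ × (Fin 4 → ℝ) × Matrix (Fin 4) (Fin 4) ℝ → ℝ)
    (hL : L = fun x =>
      (-(1 / 4) * ∑ α, ∑ β, ∑ ξ, ∑ η, x.1 α β * x.1 ξ η * x.2.2 α ξ * x.2.2 β η
        + (1 / 2) * m ^ 2 * ∑ α, ∑ β, x.2.1 α * x.2.1 β * x.2.2 α β)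
      * (-x.2.2.det) ^ (-(1 / 2) : ℝ)) :
    ∀ μ ν : Fin 4,
      -(∑ β, fderiv ℝ L (f, a, G) (0, 0, Matrix.single ν β 1) * G μ β)
      - (∑ β, fderiv ℝ L (f, a, G) (0, 0, Matrix.single β ν 1) * G β μ)
      + (∑ β, fderiv ℝ L (f, a, G) (Matrix.single μ β 1, 0, 0) * f ν β)
      + (∑ β, fderiv ℝ L (f, a, G) (Matrix.single β μ 1, 0, 0) * f β ν)
      + fderiv ℝ L (f, a, G) (0, Pi.single μ 1, 0) * a ν
      = if μ = ν then L (f, a, G) else 0 := by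
  intro μ ν
  obtain rfl : L = procaLagrangian m := hL
  set D := fderiv ℝ (procaLagrangian m) (f, a, G)
  let φ₁ := (D ∘L .inl ℝ _ _).toLinearMap
  let φ₃ := (D ∘L .inr ℝ _ _ ∘L .inr ℝ _ _).toLinearMap
  have hEG : ∑ β, D (0, 0, single ν β 1) * G μ β = D (0, 0, single ν μ 1 * G) :=
    sum_map_single_mul_eq_map_single_mul φ₃ ν μ G
  have hGE : ∑ β, D (0, 0, single β ν 1) * G β μ = D (0, 0, G * single μ ν 1) :=
    sum_map_single_mul_eq_map_mul_single φ₃ μ ν G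
  have hEf : ∑ β, D (single μ β 1, 0, 0) * f ν β = D (single μ ν 1 * f, 0, 0) :=
    sum_map_single_mul_eq_map_single_mul φ₁ μ ν f
  have hfE : ∑ β, D (single β μ 1, 0, 0) * f β ν = D (f * single ν μ 1, 0, 0) :=
    sum_map_single_mul_eq_map_mul_single φ₁ ν μ f
  have hconj := fderiv_procaLagrangian_conj m f G (single ν μ 1) a hdet
  rw [transpose_single, single_mulVec_eq, one_mul] at hconj
  have hdir : ((single μ ν 1 * f + f * single ν μ 1, a ν • Pi.single μ 1,
        -(single ν μ 1 * G + G * single μ ν 1)) : ProcaFields (Fin 4))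
      = (single μ ν 1 * f, 0, 0) + (f * single ν μ 1, 0, 0) + a ν • (0, Pi.single μ 1, 0)
        - (0, 0, single ν μ 1 * G) - (0, 0, G * single μ ν 1) := by
    simp [sub_eq_add_neg, add_comm]
  rw [hdir, map_sub, map_sub, map_add, map_add, map_smul, smul_eq_mul] at hconj
  rw [hEG, hGE, hEf, hfE]
  split_ifs with h
  · subst h
    rw [trace_single_eq_same] at hconj
    linear_combination hconj
  · rw [trace_single_eq_of_ne _ _ _ (Ne.symm h)] at hconj
    linear_combination hconj
end

section
/- Let m, M : ℝ with M ≠ 0, let ψ, ψ̄ : Fin 4 → ℂ (spinor and adjoint spinor), P, P̄ : Fin 4 → Fin 4 → ℂ (the arrays P c μ = ∂ψ^c/∂x^μ and P̄ a μ = ∂ψ̄_a/∂x^μ, treated as independent variables), and γ : Fin 4 → Matrix (Fin 4) (Fin 4) ℂ (the Dirac matrices, (γ^α)_{a c} = γ α a c). Define σ α β a c = (I/2) ∑_{e} (γ α a e · γ β e c − γ β a e · γ α e c) and the regularized Dirac Lagrangian L(ψ, ψ̄, P, P̄, γ) = (I/2) ∑_{a,c,α} ( ψ̄ a · γ α a c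 · P c α − P̄ a α · γ α a c · ψ c ) − m ∑_{a} ψ̄ a · ψ a + (I/(3M)) ∑_{a,c,α,β} P̄ a α · σ α β a c · P c β. Then for all μ, ν ∈ Fin 4: ∑_{c} (∂L/∂P_{(c,μ)}) · P c ν + ∑_{a} P̄ a ν · (∂L/∂P̄_{(a,μ)}) − ∑_{a,c} (∂L/∂γ_{(ν,a,c)}) · γ μ a c = 0, where all partial derivatives are complex Fréchet partial derivatives at (ψ, ψ̄, P, P̄, γ), and the derivative with respect to γ takes into account the dependence of σ on γ. -/
attribute [local instance] Matrix.normedAddCommGroup Matrix.normedSpace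

/-!
The spacetime index of `P`, `P̄` and `γ` only ever enters the Lagrangian through the slashes
`γ^α P_{cα}` and `γ^α P̄_{aα}`; the `σ` term is the commutator of two slashes. Under the
infinitesimal coordinate change generated by a matrix `E`, the derivatives move by `P ↦ P E` and
the Dirac matrices by `γ ↦ -E γ`, and since the slash is bilinear these two first-order changes
cancel: along the line through the point in this direction every slash, hence the Lagrangian,
is a function of `t²`, so the directional derivative vanishes. The identity is this statement for
the matrix unit `E = e_{νμ}`, read off in coordinates.
-/

open Complex Finset Matrix

theorem fderiv_apply_eq_zero_of_eq_comp_sq {𝕜 E F : Type*} [NontriviallyNormedField 𝕜]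
    [NormedAddCommGroup E] [NormedSpace 𝕜 E] [NormedAddCommGroup F] [NormedSpace 𝕜 F]
    {L : E → F} {x v : E} {g : 𝕜 → F} (hL : DifferentiableAt 𝕜 L x)
    (hg : DifferentiableAt 𝕜 g 0) (h : ∀ t : 𝕜, L (x + t • v) = g (t ^ 2)) :
    fderiv 𝕜 L x v = 0 := by
  have hline : HasDerivAt (fun t : 𝕜 => L (x + t • v)) (fderiv 𝕜 L x v) 0 := by
    simpa [Function.comp_def] using hL.hasFDerivAt.comp_hasDerivAt_of_eq 0
      (((hasDerivAt_id (0 : 𝕜)).smul_const v).const_add x) (by simp)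
  have heven : HasDerivAt (fun t : 𝕜 => g (t ^ 2)) 0 0 := by
    simpa [Function.comp_def] using
      hg.hasDerivAt.scomp_of_eq 0 (hasDerivAt_pow 2 (0 : 𝕜)) (by simp)
  exact hline.unique (by simpa only [h] using heven)

namespace Dirac

section Slash

variable {R S T : Type*} [CommRing R] [Fintype T]

def slash (γ : T → Matrix S S R) (p : T → R) : Matrix S S R := ∑ α, p α • γ α

def mulGamma (E : Matrix T T R) (γ : T → Matrix S S R) : T → Matrix S S R :=
  fun α => ∑ β, E α β • γ β

theorem slash_add_smul_add_smul (γ G : T → Matrix S S R) (p q : T → R) (t : R) :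
    slash (γ + t • G) (p + t • q)
      = slash γ p + t • (slash G p + slash γ q) + t ^ 2 • slash G q := by
  simp only [slash, smul_add, smul_sum, ← sum_add_distrib]
  refine sum_congr rfl fun α _ => ?_
  simp only [Pi.add_apply, Pi.smul_apply, smul_eq_mul]
  module

theorem slash_mulGamma (E : Matrix T T R) (γ : T → Matrix S S R) (p : T → R) :
    slash (mulGamma E γ) p = slash γ (p ᵥ* E) := by
  simp only [slash, mulGamma, vecMul, dotProduct, smul_sum, sum_smul, smul_smul]
  exact sum_comm

theorem slash_sub_smul_mulGamma_add_smul_vecMul (E : Matrix T T R) (γ : T → Matrix S S R)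
    (p : T → R) (t : R) :
    slash (γ - t • mulGamma E γ) (p + t • p ᵥ* E)
      = slash γ p - t ^ 2 • slash (mulGamma E γ) (p ᵥ* E) := by
  rw [sub_eq_add_neg, ← smul_neg, slash_add_smul_add_smul]
  simp only [slash, Pi.neg_apply, smul_neg, sum_neg_distrib]
  rw [← slash, ← slash, ← slash, slash_mulGamma]
  module

theorem slash_mul_slash_sub_slash_mul_slash [Fintype S] (γ : T → Matrix S S R) (p q : T → R) :
    slash γ p * slash γ q - slash γ q * slash γ p
      = ∑ α, ∑ β, (p α * q β) • (γ α * γ β - γ β * γ α) := by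
  simp only [slash, sum_mul_sum, smul_mul_smul_comm]
  rw [sum_comm (f := fun α β => (q α * p β) • (γ α * γ β)), ← sum_sub_distrib]
  refine sum_congr rfl fun α _ => ?_
  rw [← sum_sub_distrib]
  refine sum_congr rfl fun β _ => ?_
  rw [mul_comm (q β), smul_sub]

end Slash

variable {S T : Type*} [Fintype S] [Fintype T]

abbrev Vars (S T : Type*) :=
  (S → ℂ) × (S → ℂ) × (S → T → ℂ) × (S → T → ℂ) × (T → Matrix S S ℂ)

noncomputable def lagrangian (m M : ℝ) (x : Vars S T) : ℂ :=
  (I / 2) * (∑ a, ∑ c, ∑ α,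
      (x.2.1 a * x.2.2.2.2 α a c * x.2.2.1 c α
        - x.2.2.2.1 a α * x.2.2.2.2 α a c * x.1 c))
  - (m : ℂ) * ∑ a, x.2.1 a * x.1 a
  + (I / (3 * (M : ℂ))) * ∑ a, ∑ c, ∑ α, ∑ β,
      x.2.2.2.1 a α
        * ((I / 2) * ∑ e, (x.2.2.2.2 α a e * x.2.2.2.2 β e c
            - x.2.2.2.2 β a e * x.2.2.2.2 α e c))
        * x.2.2.1 c β

noncomputable def lagrangianOfSlashes (m M : ℝ) (ψ ψbar : S → ℂ) (A B : S → Matrix S S ℂ) :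
    ℂ :=
  (I / 2) * ∑ a, ∑ c, (ψbar a * A c a c - B a a c * ψ c) - (m : ℂ) * ∑ a, ψbar a * ψ a
    + (I / (3 * (M : ℂ))) * ∑ a, ∑ c, ((I / 2) • (B a * A c - A c * B a)) a c

theorem lagrangian_eq_lagrangianOfSlashes (m M : ℝ) (ψ ψbar : S → ℂ) (P Pbar : S → T → ℂ)
    (γ : T → Matrix S S ℂ) :
    lagrangian m M (ψ, ψbar, P, Pbar, γ)
      = lagrangianOfSlashes m M ψ ψbar (fun c => slash γ (P c)) (fun a => slash γ (Pbar a)) := by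
  have hkinetic (a c : S) : ∑ α, ψbar a * γ α a c * P c α = ψbar a * slash γ (P c) a c := by
    simp only [slash, Matrix.sum_apply, Matrix.smul_apply, smul_eq_mul, mul_sum]
    exact sum_congr rfl fun α _ => by ring
  have hkinetic' (a c : S) : ∑ α, Pbar a α * γ α a c * ψ c = slash γ (Pbar a) a c * ψ c := by
    simp only [slash, Matrix.sum_apply, Matrix.smul_apply, smul_eq_mul, sum_mul]
  have hspin (a c : S) : ∑ α, ∑ β, Pbar a α
        * ((I / 2) * (∑ e, γ α a e * γ β e c - ∑ e, γ β a e * γ α e c)) * P c β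
      = ((I / 2) • (slash γ (Pbar a) * slash γ (P c) - slash γ (P c) * slash γ (Pbar a))) a c := by
    rw [slash_mul_slash_sub_slash_mul_slash]
    simp only [Matrix.smul_apply, Matrix.sub_apply, Matrix.sum_apply, Matrix.mul_apply,
      smul_eq_mul, mul_sum]
    exact sum_congr rfl fun α _ => sum_congr rfl fun β _ => by ring
  simp only [lagrangian, lagrangianOfSlashes, sum_sub_distrib, hkinetic, hkinetic', hspin]

/-- The first-order change of the variables under the coordinate change `x ↦ (1 + t E) x`:
derivatives transform covariantly, the Dirac matrices contravariantly. -/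
def glVariation (E : Matrix T T ℂ) (P Pbar : S → T → ℂ) (γ : T → Matrix S S ℂ) : Vars S T :=
  (0, 0, fun c => P c ᵥ* E, fun a => Pbar a ᵥ* E, -mulGamma E γ)

theorem lagrangian_add_smul_glVariation (m M : ℝ) (ψ ψbar : S → ℂ) (P Pbar : S → T → ℂ)
    (γ : T → Matrix S S ℂ) (E : Matrix T T ℂ) (t : ℂ) :
    lagrangian m M ((ψ, ψbar, P, Pbar, γ) + t • glVariation E P Pbar γ)
      = lagrangianOfSlashes m M ψ ψbar
          (fun c => slash γ (P c) - t ^ 2 • slash (mulGamma E γ) (P c ᵥ* E))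
          (fun a => slash γ (Pbar a) - t ^ 2 • slash (mulGamma E γ) (Pbar a ᵥ* E)) := by
  simp only [glVariation, Prod.smul_mk, Prod.mk_add_mk, smul_zero, add_zero, smul_neg,
    ← sub_eq_add_neg, lagrangian_eq_lagrangianOfSlashes, Pi.add_apply, Pi.smul_apply,
    slash_sub_smul_mulGamma_add_smul_vecMul]

theorem fderiv_lagrangian_glVariation (m M : ℝ) (ψ ψbar : S → ℂ) (P Pbar : S → T → ℂ)
    (γ : T → Matrix S S ℂ) (E : Matrix T T ℂ) :
    fderiv ℂ (lagrangian m M) (ψ, ψbar, P, Pbar, γ) (glVariation E P Pbar γ) = 0 := by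
  refine fderiv_apply_eq_zero_of_eq_comp_sq (g := fun s => lagrangianOfSlashes m M ψ ψbar
      (fun c => slash γ (P c) - s • slash (mulGamma E γ) (P c ᵥ* E))
      (fun a => slash γ (Pbar a) - s • slash (mulGamma E γ) (Pbar a ᵥ* E))) ?_ ?_
    (lagrangian_add_smul_glVariation m M ψ ψbar P Pbar γ E)
  · unfold lagrangian
    fun_prop
  · simp only [lagrangianOfSlashes, Matrix.smul_apply, Matrix.sub_apply, Matrix.mul_apply,
      smul_eq_mul]
    fun_prop

theorem glVariation_single_eq_sum [DecidableEq S] [DecidableEq T] (P Pbar : S → T → ℂ)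
    (γ : T → Matrix S S ℂ) (μ ν : T) :
    glVariation (single ν μ 1) P Pbar γ
      = ∑ c, P c ν • ((0, 0, fun c' μ' => if c' = c ∧ μ' = μ then 1 else 0, 0, 0) : Vars S T)
        + ∑ a, Pbar a ν • ((0, 0, 0, fun a' μ' => if a' = a ∧ μ' = μ then 1 else 0, 0) : Vars S T)
        - ∑ a, ∑ c, γ μ a c • ((0, 0, 0, 0, Pi.single ν (single a c 1)) : Vars S T) := by
  refine Prod.ext ?_ (Prod.ext ?_ (Prod.ext ?_ (Prod.ext ?_ ?_))) <;> ext <;>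
    simp [glVariation, mulGamma, Prod.fst_sum, Prod.snd_sum, vecMul, dotProduct, single_apply,
      Finset.sum_apply, Pi.single_apply, ite_and, eq_comm, ← matrix_eq_sum_single]

end Dirac

open Complex in
theorem dirac_metric_index_identity_general
    (m M : ℝ)
    (ψ ψbar : Fin 4 → ℂ) (P Pbar : Fin 4 → Fin 4 → ℂ)
    (γ : Fin 4 → Matrix (Fin 4) (Fin 4) ℂ)
    (L : (Fin 4 → ℂ) × (Fin 4 → ℂ) × (Fin 4 → Fin 4 → ℂ) × (Fin 4 → Fin 4 → ℂ)
          × (Fin 4 → Matrix (Fin 4) (Fin 4) ℂ) → ℂ)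
    (hL : L = fun x =>
      (I / 2) * (∑ a, ∑ c, ∑ α,
          (x.2.1 a * x.2.2.2.2 α a c * x.2.2.1 c α
            - x.2.2.2.1 a α * x.2.2.2.2 α a c * x.1 c))
      - (m : ℂ) * ∑ a, x.2.1 a * x.1 a
      + (I / (3 * (M : ℂ))) * ∑ a, ∑ c, ∑ α, ∑ β,
          x.2.2.2.1 a α
            * ((I / 2) * ∑ e, (x.2.2.2.2 α a e * x.2.2.2.2 β e c
                - x.2.2.2.2 β a e * x.2.2.2.2 α e c))
            * x.2.2.1 c β) :
    ∀ μ ν : Fin 4,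
      (∑ c, fderiv ℂ L (ψ, ψbar, P, Pbar, γ)
          (0, 0, (fun c' μ' => if c' = c ∧ μ' = μ then 1 else 0), 0, 0) * P c ν)
      + (∑ a, Pbar a ν * fderiv ℂ L (ψ, ψbar, P, Pbar, γ)
          (0, 0, 0, (fun a' μ' => if a' = a ∧ μ' = μ then 1 else 0), 0))
      - (∑ a, ∑ c, fderiv ℂ L (ψ, ψbar, P, Pbar, γ)
          (0, 0, 0, 0, Pi.single ν (Matrix.single a c 1)) * γ μ a c)
      = 0 := by
  intro μ ν
  obtain rfl : L = Dirac.lagrangian m M := hL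
  have noether := Dirac.fderiv_lagrangian_glVariation m M ψ ψbar P Pbar γ (Matrix.single ν μ 1)
  rw [Dirac.glVariation_single_eq_sum] at noether
  simpa only [map_sub, map_add, map_sum, map_smul, smul_eq_mul, mul_comm] using noether

open Complex in
/-- the identity (Eq. (16)) for the space-time (metric) index class of
the regularized Dirac Lagrangian, with the spinor indices fully contracted; the
derivative with respect to the Dirac matrices `γ` accounts for the dependence of
`σ^{αβ} = (i/2)[γ^α, γ^β]` on `γ`. -/
theorem dirac_metric_index_identity
    (m M : ℝ) (hM : M ≠ 0)
    (ψ ψbar : Fin 4 → ℂ) (P Pbar : Fin 4 → Fin 4 → ℂ)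
    (γ : Fin 4 → Matrix (Fin 4) (Fin 4) ℂ)
    (L : (Fin 4 → ℂ) × (Fin 4 → ℂ) × (Fin 4 → Fin 4 → ℂ) × (Fin 4 → Fin 4 → ℂ)
          × (Fin 4 → Matrix (Fin 4) (Fin 4) ℂ) → ℂ)
    (hL : L = fun x =>
      (I / 2) * (∑ a, ∑ c, ∑ α,
          (x.2.1 a * x.2.2.2.2 α a c * x.2.2.1 c α
            - x.2.2.2.1 a α * x.2.2.2.2 α a c * x.1 c))
      - (m : ℂ) * ∑ a, x.2.1 a * x.1 a
      + (I / (3 * (M : ℂ))) * ∑ a, ∑ c, ∑ α, ∑ β,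
          x.2.2.2.1 a α
            * ((I / 2) * ∑ e, (x.2.2.2.2 α a e * x.2.2.2.2 β e c
                - x.2.2.2.2 β a e * x.2.2.2.2 α e c))
            * x.2.2.1 c β) :
    ∀ μ ν : Fin 4,
      (∑ c, fderiv ℂ L (ψ, ψbar, P, Pbar, γ)
          (0, 0, (fun c' μ' => if c' = c ∧ μ' = μ then 1 else 0), 0, 0) * P c ν)
      + (∑ a, Pbar a ν * fderiv ℂ L (ψ, ψbar, P, Pbar, γ)
          (0, 0, 0, (fun a' μ' => if a' = a ∧ μ' = μ then 1 else 0), 0))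
      - (∑ a, ∑ c, fderiv ℂ L (ψ, ψbar, P, Pbar, γ)
          (0, 0, 0, 0, Pi.single ν (Matrix.single a c 1)) * γ μ a c)
      = 0 :=
  dirac_metric_index_identity_general m M ψ ψbar P Pbar γ L hL
end

section
/- Let Riem : Fin 4 → Fin 4 → Fin 4 → Fin 4 → ℝ and G : Matrix (Fin 4) (Fin 4) ℝ with det G < 0, define Ric ξ λ = ∑_{η} Riem η ξ η λ, √ = (−det G)^{−1/2}, and R̃(Riem, G) = (∑_{ξ,λ} Ric ξ λ · G ξ λ) · √. Then for all μ, ν ∈ Fin 4 the following four identities hold, with all partial derivatives Fréchet partial derivatives in the Riemann slot at (Riem, G): (a) ∑_{ξ,β,λ} (∂R̃/∂Riem_{(ν,ξ,β,λ)}) · Riem μ ξ β λ = (∑_{ξ,λ} Riem μ ξ ν λ · G ξ λ) · √; (b) ∑_{η,β,λ} (∂R̃/∂Riem_{(η,μ,β,λ)}) · Riem η ν β λ = (∑_{λ} Ric ν λ · G μ λ) · √; (c) ∑_{η,ξ,λ} (∂R̃/∂Riem_{(η,ξ,μ,λ)}) · Riem η ξ ν λ = (∑_{ξ,λ} Riem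 μ ξ ν λ · G ξ λ) · √; (d) ∑_{η,ξ,β} (∂R̃/∂Riem_{(η,ξ,β,μ)}) · Riem η ξ β ν = (∑_{ξ} Ric ξ ν · G ξ μ) · √. -/
attribute [local instance] Matrix.normedAddCommGroup Matrix.normedSpace

/-! The density is linear in the Riemann-Cartan slot, so its Fréchet derivative along a pure
Riemann direction `(E, 0)` is the partial derivative `√(-g) · E^η_{ξηλ} g^{ξλ}`. On the basis
tensor at `(η, ξ, β, λ)` this is `δ^η_β g^{ξλ} √(-g)`, and in each of the four contractions the
Kronecker delta collapses one summation. -/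

open Finset

section

variable {𝕜 E F G : Type*} [NontriviallyNormedField 𝕜] [NormedAddCommGroup E] [NormedSpace 𝕜 E]
  [NormedAddCommGroup F] [NormedSpace 𝕜 F] [NormedAddCommGroup G] [NormedSpace 𝕜 G]

theorem fderiv_apply_inl {f : E × F → G} {x : E} {y : F} (hf : DifferentiableAt 𝕜 f (x, y))
    (v : E) : fderiv 𝕜 f (x, y) (v, 0) = fderiv 𝕜 (fun x' => f (x', y)) x v := by
  have h : HasFDerivAt (fun x' => f (x', y)) ((fderiv 𝕜 f (x, y)).comp (.inl 𝕜 E F)) x :=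
    hf.hasFDerivAt.comp x (hasFDerivAt_prodMk_left x y)
  rw [h.fderiv]
  rfl

end

section

variable {ι : Type*} [Fintype ι]

@[fun_prop]
theorem Matrix.differentiable_det_s12 [DecidableEq ι] :
    Differentiable ℝ (Matrix.det : Matrix ι ι ℝ → ℝ) := by
  have : (Matrix.det : Matrix ι ι ℝ → ℝ) =
      fun A => ∑ σ : Equiv.Perm ι, (Equiv.Perm.sign σ : ℝ) * ∏ i, A (σ i) i := by
    funext A; exact Matrix.det_apply' A
  rw [this]; fun_prop

def scalarCurvature (G : Matrix ι ι ℝ) : (ι → ι → ι → ι → ℝ) →ₗ[ℝ] ℝ where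
  toFun R := ∑ ξ, ∑ l, (∑ η, R η ξ η l) * G ξ l
  map_add' R R' := by simp only [Pi.add_apply, sum_add_distrib, add_mul]
  map_smul' c R := by
    simp only [Pi.smul_apply, smul_eq_mul, ← mul_sum, mul_assoc, RingHom.id_apply]

noncomputable def ehcDensity [DecidableEq ι] (x : (ι → ι → ι → ι → ℝ) × Matrix ι ι ℝ) : ℝ :=
  scalarCurvature x.2 x.1 * (-x.2.det) ^ (-(1 / 2) : ℝ)

theorem differentiableAt_ehcDensity [DecidableEq ι] {R : ι → ι → ι → ι → ℝ} {G : Matrix ι ι ℝ}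
    (hG : G.det < 0) : DifferentiableAt ℝ ehcDensity (R, G) := by
  unfold ehcDensity scalarCurvature
  simp only [LinearMap.coe_mk, AddHom.coe_mk]
  have : -G.det ≠ 0 := by linarith
  fun_prop (disch := simp [this])

theorem fderiv_ehcDensity_apply_inl [DecidableEq ι] {R : ι → ι → ι → ι → ℝ} {G : Matrix ι ι ℝ}
    (hG : G.det < 0) (E : ι → ι → ι → ι → ℝ) :
    fderiv ℝ ehcDensity (R, G) (E, 0) = scalarCurvature G E * (-G.det) ^ (-(1 / 2) : ℝ) := by
  have h : HasFDerivAt (fun x => ehcDensity (x, G))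
      ((-G.det) ^ (-(1 / 2) : ℝ) • LinearMap.toContinuousLinearMap (scalarCurvature G)) R := by
    simpa [ehcDensity] using
      (LinearMap.toContinuousLinearMap (scalarCurvature G)).hasFDerivAt.mul_const
        ((-G.det) ^ (-(1 / 2) : ℝ))
  -- `erw`: here the derivative's domain carries the synthesized product topology, in
  -- `fderiv_apply_inl` the one induced by the norm; they agree only up to unfolding.
  erw [fderiv_apply_inl (differentiableAt_ehcDensity (R := R) hG), h.fderiv]
  simp [mul_comm]

theorem scalarCurvature_single [DecidableEq ι] (G : Matrix ι ι ℝ) (η ξ β l : ι) :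
    scalarCurvature G (fun a b c d => if a = η ∧ b = ξ ∧ c = β ∧ d = l then 1 else 0) =
      if η = β then G ξ l else 0 := by
  simp [scalarCurvature, ite_and, sum_ite_eq']

end

/-- Eqs. (18b)–(18e), the contractions of the derivatives of the
Einstein-Hilbert-Cartan scalar density with respect to the Riemann-Cartan tensor,
with one contracted index pair replaced by the open indices `μ, ν`. -/
theorem ehc_riemann_derivative_terms
    (Riem : Fin 4 → Fin 4 → Fin 4 → Fin 4 → ℝ)
    (G : Matrix (Fin 4) (Fin 4) ℝ) (hdet : G.det < 0)
    (Ric : Fin 4 → Fin 4 → ℝ) (hRic : Ric = fun ξ l => ∑ η, Riem η ξ η l)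
    (Rt : (Fin 4 → Fin 4 → Fin 4 → Fin 4 → ℝ) × Matrix (Fin 4) (Fin 4) ℝ → ℝ)
    (hRt : Rt = fun x =>
      (∑ ξ, ∑ l, (∑ η, x.1 η ξ η l) * x.2 ξ l) * (-x.2.det) ^ (-(1 / 2) : ℝ)) :
    ∀ μ ν : Fin 4,
      ((∑ ξ, ∑ β, ∑ l, fderiv ℝ Rt (Riem, G)
          ((fun a b c d => if a = ν ∧ b = ξ ∧ c = β ∧ d = l then 1 else 0), 0)
          * Riem μ ξ β l)
        = (∑ ξ, ∑ l, Riem μ ξ ν l * G ξ l) * (-G.det) ^ (-(1 / 2) : ℝ)) ∧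
      ((∑ η, ∑ β, ∑ l, fderiv ℝ Rt (Riem, G)
          ((fun a b c d => if a = η ∧ b = μ ∧ c = β ∧ d = l then 1 else 0), 0)
          * Riem η ν β l)
        = (∑ l, Ric ν l * G μ l) * (-G.det) ^ (-(1 / 2) : ℝ)) ∧
      ((∑ η, ∑ ξ, ∑ l, fderiv ℝ Rt (Riem, G)
          ((fun a b c d => if a = η ∧ b = ξ ∧ c = μ ∧ d = l then 1 else 0), 0)
          * Riem η ξ ν l)
        = (∑ ξ, ∑ l, Riem μ ξ ν l * G ξ l) * (-G.det) ^ (-(1 / 2) : ℝ)) ∧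
      ((∑ η, ∑ ξ, ∑ β, fderiv ℝ Rt (Riem, G)
          ((fun a b c d => if a = η ∧ b = ξ ∧ c = β ∧ d = μ then 1 else 0), 0)
          * Riem η ξ β ν)
        = (∑ ξ, Ric ξ ν * G ξ μ) * (-G.det) ^ (-(1 / 2) : ℝ)) := by
  intro μ ν
  obtain rfl : Rt = ehcDensity := hRt
  subst hRic
  refine ⟨?_, ?_, ?_, ?_⟩ <;>
    simp only [fderiv_ehcDensity_apply_inl hdet, scalarCurvature_single, ite_mul, zero_mul,
      sum_ite_irrel, sum_const_zero, sum_ite_eq, sum_ite_eq', mem_univ, if_true, sum_mul]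
  · exact sum_congr rfl fun _ _ => sum_congr rfl fun _ _ => by ring
  · rw [sum_comm]
    exact sum_congr rfl fun _ _ => sum_congr rfl fun _ _ => by ring
  · exact sum_congr rfl fun _ _ => sum_congr rfl fun _ _ => by ring
  · rw [sum_comm]
    exact sum_congr rfl fun _ _ => sum_congr rfl fun _ _ => by ring
end

section
/- Let Riem : Fin 4 → Fin 4 → Fin 4 → Fin 4 → ℝ and let G : Matrix (Fin 4) (Fin 4) ℝ be symmetric with det G < 0. With Ric ξ λ = ∑_{η} Riem η ξ η λ, √ = (−det G)^{−1/2} and R̃(Riem, G) = (∑_{ξ,λ} Ric ξ λ · G ξ λ) · √, define the metric energy-momentum tensor density T̃^μ_ν = ∑_{β} (∂R̃/∂G_{(ν,β)}) · G μ β + ∑_{β} (∂R̃/∂G_{(β,ν)}) · G β μ and the canonical one θ̃^μ_ν = ∑_{η,ξ,λ} (∂R̃/∂Riem_{(η,ξ,μ,λ)}) · Riem η ξ ν λ + ∑_{η,ξ,β} (∂R̃/∂Riem_{(η,ξ,β,μ)}) · Riem η ξ β ν − (if μ = ν then R̃(Riem,G) else 0). Then for all μ, ν ∈ Fin 4: T̃^μ_ν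 = θ̃^μ_ν + (∑_{β} Ric ν β · G μ β − ∑_{ξ,λ} Riem μ ξ ν λ · G ξ λ) · √; i.e. the metric and canonical energy-momentum tensors of the Einstein-Hilbert-Cartan Lagrangian differ exactly by R̃_ν^μ − R̃^μ_ν, and they agree whenever these two Ricci contractions coincide (in particular for a symmetric Ricci tensor, i.e. torsion-free space-time). -/
/-!
The Lagrangian `R̃ = S √(−g)`, `S = R_{ξλ} g^{ξλ}`, is linear in the Riemann tensor, so its
derivative along a basis tensor just contracts that tensor with `g^{ξλ} √(−g)`: the two Riemann
terms of the canonical tensor become `(R^μ_{ξνλ} g^{ξλ} + R_{βν} g^{βμ}) √(−g)`.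
Along `g + t E_{ab}` both `S` and `det g` are affine in `t`, the latter with slope the cofactor
`adj(g)_{ba}`, so `∂R̃/∂g^{ab} = (R_{ab} − S adj(g)_{ba} / (2 det g)) √(−g)`. Contracting with `g`
and using `g · adj g = adj g · g = det g · 1`, the cofactor terms of the metric tensor add up to
`−δ^μ_ν R̃`, the trace term of the canonical tensor, and only
`(R_{νβ} g^{μβ} − R^μ_{ξνλ} g^{ξλ}) √(−g)` is left.
-/

attribute [local instance] Matrix.normedAddCommGroup Matrix.normedSpace

theorem Matrix.differentiable_det_s13 {𝕜 n : Type*} [NontriviallyNormedField 𝕜] [Fintype n]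
    [DecidableEq n] : Differentiable 𝕜 (Matrix.det : Matrix n n 𝕜 → 𝕜) := by
  change Differentiable 𝕜 fun M : Matrix n n 𝕜 => M.det
  simp only [Matrix.det_apply']
  fun_prop

theorem Matrix.det_add_smul_single_s13 {n R : Type*} [Fintype n] [DecidableEq n] [CommRing R]
    (G : Matrix n n R) (i j : n) (t : R) :
    (G + t • Matrix.single i j 1).det = G.det + t * G.adjugate j i := by
  have h : G + t • Matrix.single i j 1 = G.updateRow i (G i + t • Pi.single j 1) := by
    ext a b
    by_cases ha : a = i
    · subst ha
      simp [Matrix.single, Pi.single_apply, eq_comm]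
    · simp [Matrix.updateRow_ne ha, Matrix.single, Ne.symm ha]
  rw [h, Matrix.det_updateRow_add, Matrix.updateRow_eq_self, Matrix.det_updateRow_smul,
    ← Matrix.adjugate_apply]

theorem hasDerivAt_affine_mul_rpow_neg {c₀ c₁ d₀ d₁ : ℝ} (hd : d₀ ≠ 0) (p : ℝ) :
    HasDerivAt (fun t => (c₀ + t * c₁) * (-(d₀ + t * d₁)) ^ p)
      ((c₁ + p * c₀ * d₁ / d₀) * (-d₀) ^ p) 0 := by
  have hc : HasDerivAt (fun t : ℝ => c₀ + t * c₁) c₁ 0 := by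
    simpa using ((hasDerivAt_id' (0 : ℝ)).mul_const c₁).const_add c₀
  have hd' : HasDerivAt (fun t : ℝ => -(d₀ + t * d₁)) (-d₁) 0 := by
    simpa using (((hasDerivAt_id' (0 : ℝ)).mul_const d₁).const_add d₀).fun_neg
  refine (hc.mul (hd'.rpow_const (p := p) (Or.inl (by simpa using hd)))).congr_deriv ?_
  simp only [zero_mul, add_zero]
  rw [Real.rpow_sub_one (neg_ne_zero.mpr hd)]
  field_simp

namespace EinsteinHilbertCartan

open Matrix

variable {n : Type*} [Fintype n]

noncomputable section

/-- `R η ξ β λ` stands for the Riemann-Cartan tensor `R^η_{ξβλ}`. -/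
abbrev Riemann (n : Type*) := n → n → n → n → ℝ

def ricci (R : Riemann n) (ξ l : n) : ℝ := ∑ η, R η ξ η l

def scalarCurvature (R : Riemann n) (G : Matrix n n ℝ) : ℝ :=
  ∑ ξ, ∑ l, ricci R ξ l * G ξ l

theorem scalarCurvature_add_smul_left (R D : Riemann n) (G : Matrix n n ℝ) (t : ℝ) :
    scalarCurvature (R + t • D) G = scalarCurvature R G + t * scalarCurvature D G := by
  simp only [scalarCurvature, ricci, Pi.add_apply, Pi.smul_apply, smul_eq_mul,
    Finset.sum_add_distrib, add_mul, ← Finset.mul_sum, mul_assoc]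

variable [DecidableEq n]

def metricDensity (G : Matrix n n ℝ) : ℝ := (-G.det) ^ (-(1 / 2) : ℝ)

def lagrangian (x : Riemann n × Matrix n n ℝ) : ℝ :=
  scalarCurvature x.1 x.2 * metricDensity x.2

def riemannBasis (η ξ β l : n) : Riemann n :=
  fun a b c d => if a = η ∧ b = ξ ∧ c = β ∧ d = l then 1 else 0

def metricEMT (L : Riemann n × Matrix n n ℝ → ℝ) (x : Riemann n × Matrix n n ℝ) (μ ν : n) :
    ℝ :=
  ∑ β, fderiv ℝ L x (0, single ν β 1) * x.2 μ β
    + ∑ β, fderiv ℝ L x (0, single β ν 1) * x.2 β μ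

def canonicalEMT (L : Riemann n × Matrix n n ℝ → ℝ) (x : Riemann n × Matrix n n ℝ) (μ ν : n) :
    ℝ :=
  ∑ η, ∑ ξ, ∑ l, fderiv ℝ L x (riemannBasis η ξ μ l, 0) * x.1 η ξ ν l
    + ∑ η, ∑ ξ, ∑ β, fderiv ℝ L x (riemannBasis η ξ β μ, 0) * x.1 η ξ β ν
    - if μ = ν then L x else 0

theorem scalarCurvature_add_smul_single (R : Riemann n) (G : Matrix n n ℝ) (a b : n)
    (t : ℝ) :
    scalarCurvature R (G + t • single a b 1) = scalarCurvature R G + t * ricci R a b := by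
  simp [scalarCurvature, single_apply, mul_add, Finset.sum_add_distrib, ite_and, mul_comm t]

theorem scalarCurvature_riemannBasis (G : Matrix n n ℝ) (η ξ β l : n) :
    scalarCurvature (riemannBasis η ξ β l) G = if η = β then G ξ l else 0 := by
  simp [scalarCurvature, ricci, riemannBasis, ite_and]

variable {R : Riemann n} {G : Matrix n n ℝ}

theorem differentiableAt_lagrangian (hG : G.det ≠ 0) :
    DifferentiableAt ℝ lagrangian (R, G) := by
  have hcurv : Differentiable ℝ fun x : Riemann n × Matrix n n ℝ =>
      scalarCurvature x.1 x.2 := by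
    unfold scalarCurvature ricci
    fun_prop
  have hdet : Differentiable ℝ fun x : Riemann n × Matrix n n ℝ => x.2.det :=
    differentiable_det_s13.comp differentiable_snd
  exact hcurv.differentiableAt.mul ((hdet _).neg.rpow_const (Or.inl (neg_ne_zero.mpr hG)))

theorem fderiv_lagrangian_of_affine (hG : G.det ≠ 0) {v : Riemann n × Matrix n n ℝ} {c d : ℝ}
    (hc : ∀ t : ℝ, scalarCurvature (R + t • v.1) (G + t • v.2) = scalarCurvature R G + t * c)
    (hd : ∀ t : ℝ, (G + t • v.2).det = G.det + t * d) :
    fderiv ℝ lagrangian (R, G) v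
      = (c - scalarCurvature R G * d / (2 * G.det)) * metricDensity G := by
  refine (differentiableAt_lagrangian hG).lineDeriv_eq_fderiv.symm.trans ?_
  refine HasLineDerivAt.lineDeriv ?_
  have hline := hasDerivAt_affine_mul_rpow_neg (c₀ := scalarCurvature R G) (c₁ := c) (d₁ := d) hG
    (-(1 / 2))
  refine (hline.congr_deriv (by unfold metricDensity; ring)).congr_of_eventuallyEq
    (Filter.Eventually.of_forall fun t => ?_)
  simp [lagrangian, metricDensity, hc, hd]

theorem fderiv_lagrangian_riemann (hG : G.det ≠ 0) (D : Riemann n) :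
    fderiv ℝ lagrangian (R, G) (D, 0) = scalarCurvature D G * metricDensity G := by
  rw [fderiv_lagrangian_of_affine hG (c := scalarCurvature D G) (d := 0)
    (fun t => by simp [scalarCurvature_add_smul_left]) (fun t => by simp)]
  simp

theorem fderiv_lagrangian_metric (hG : G.det ≠ 0) (a b : n) :
    fderiv ℝ lagrangian (R, G) (0, single a b 1)
      = (ricci R a b - scalarCurvature R G * G.adjugate b a / (2 * G.det)) * metricDensity G :=
  fderiv_lagrangian_of_affine hG
    (fun t => by simpa using scalarCurvature_add_smul_single R G a b t)
    (fun t => det_add_smul_single_s13 G a b t)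

theorem metricEMT_lagrangian (hG : G.det ≠ 0) (μ ν : n) :
    metricEMT lagrangian (R, G) μ ν
      = (∑ β, ricci R ν β * G μ β + ∑ β, ricci R β ν * G β μ) * metricDensity G
        - if μ = ν then lagrangian (R, G) else 0 := by
  have hGadj : ∑ β, G μ β * G.adjugate β ν = if μ = ν then G.det else 0 := by
    rw [← mul_apply, mul_adjugate, Matrix.smul_apply, one_apply, smul_eq_mul, mul_ite, mul_one,
      mul_zero]
  have hadjG : ∑ β, G.adjugate ν β * G β μ = if μ = ν then G.det else 0 := by
    rw [← mul_apply, adjugate_mul, Matrix.smul_apply, one_apply, smul_eq_mul, mul_ite, mul_one,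
      mul_zero]
    simp only [eq_comm]
  simp only [metricEMT, fderiv_lagrangian_metric hG, lagrangian]
  set S := scalarCurvature R G
  set ρ := metricDensity G
  have h₁ : ∑ β, (ricci R ν β - S * G.adjugate β ν / (2 * G.det)) * ρ * G μ β
      = (∑ β, ricci R ν β * G μ β) * ρ
        - S * ρ / (2 * G.det) * ∑ β, G μ β * G.adjugate β ν := by
    rw [Finset.sum_mul, Finset.mul_sum, ← Finset.sum_sub_distrib]
    exact Finset.sum_congr rfl fun β _ => by ring
  have h₂ : ∑ β, (ricci R β ν - S * G.adjugate ν β / (2 * G.det)) * ρ * G β μ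
      = (∑ β, ricci R β ν * G β μ) * ρ
        - S * ρ / (2 * G.det) * ∑ β, G.adjugate ν β * G β μ := by
    rw [Finset.sum_mul, Finset.mul_sum, ← Finset.sum_sub_distrib]
    exact Finset.sum_congr rfl fun β _ => by ring
  rw [h₁, h₂, hGadj, hadjG]
  split_ifs
  · field_simp
    ring
  · ring

theorem canonicalEMT_lagrangian (hG : G.det ≠ 0) (μ ν : n) :
    canonicalEMT lagrangian (R, G) μ ν
      = (∑ ξ, ∑ l, R μ ξ ν l * G ξ l + ∑ β, ricci R β ν * G β μ) * metricDensity G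
        - if μ = ν then lagrangian (R, G) else 0 := by
  have h₁ : ∑ ξ, ∑ l, G ξ l * metricDensity G * R μ ξ ν l
      = (∑ ξ, ∑ l, R μ ξ ν l * G ξ l) * metricDensity G := by
    simp only [Finset.sum_mul]
    exact Finset.sum_congr rfl fun ξ _ => Finset.sum_congr rfl fun l _ => by ring
  have h₂ : ∑ η, ∑ ξ, G ξ μ * metricDensity G * R η ξ η ν
      = (∑ β, ricci R β ν * G β μ) * metricDensity G := by
    rw [Finset.sum_comm]
    simp only [ricci, Finset.sum_mul]
    exact Finset.sum_congr rfl fun ξ _ => Finset.sum_congr rfl fun η _ => by ring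
  simp only [canonicalEMT, fderiv_lagrangian_riemann hG, scalarCurvature_riemannBasis, ite_mul,
    zero_mul, Finset.sum_ite_irrel, Finset.sum_const_zero, Finset.sum_ite_eq, Finset.sum_ite_eq',
    Finset.mem_univ, if_true]
  rw [h₁, h₂, add_mul]

theorem metricEMT_sub_canonicalEMT (hG : G.det ≠ 0) (μ ν : n) :
    metricEMT lagrangian (R, G) μ ν - canonicalEMT lagrangian (R, G) μ ν
      = (∑ β, ricci R ν β * G μ β - ∑ ξ, ∑ l, R μ ξ ν l * G ξ l) * metricDensity G := by
  rw [metricEMT_lagrangian hG, canonicalEMT_lagrangian hG]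
  ring

end

end EinsteinHilbertCartan

open EinsteinHilbertCartan

theorem ehc_emt_relation_general
    (Riem : Fin 4 → Fin 4 → Fin 4 → Fin 4 → ℝ)
    (G : Matrix (Fin 4) (Fin 4) ℝ) (hdet : G.det < 0)
    (Ric : Fin 4 → Fin 4 → ℝ) (hRic : Ric = fun ξ l => ∑ η, Riem η ξ η l)
    (Rt : (Fin 4 → Fin 4 → Fin 4 → Fin 4 → ℝ) × Matrix (Fin 4) (Fin 4) ℝ → ℝ)
    (hRt : Rt = fun x =>
      (∑ ξ, ∑ l, (∑ η, x.1 η ξ η l) * x.2 ξ l) * (-x.2.det) ^ (-(1 / 2) : ℝ))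
    (Tmet θcan : Fin 4 → Fin 4 → ℝ)
    (hT : Tmet = fun μ ν =>
      (∑ β, fderiv ℝ Rt (Riem, G) (0, Matrix.single ν β 1) * G μ β)
      + (∑ β, fderiv ℝ Rt (Riem, G) (0, Matrix.single β ν 1) * G β μ))
    (hθ : θcan = fun μ ν =>
      (∑ η, ∑ ξ, ∑ l, fderiv ℝ Rt (Riem, G)
          ((fun a b c d => if a = η ∧ b = ξ ∧ c = μ ∧ d = l then 1 else 0), 0)
          * Riem η ξ ν l)
      + (∑ η, ∑ ξ, ∑ β, fderiv ℝ Rt (Riem, G)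
          ((fun a b c d => if a = η ∧ b = ξ ∧ c = β ∧ d = μ then 1 else 0), 0)
          * Riem η ξ β ν)
      - (if μ = ν then Rt (Riem, G) else 0)) :
    ∀ μ ν : Fin 4,
      Tmet μ ν = θcan μ ν
        + ((∑ β, Ric ν β * G μ β) - (∑ ξ, ∑ l, Riem μ ξ ν l * G ξ l))
          * (-G.det) ^ (-(1 / 2) : ℝ) := by
  intro μ ν
  have hL : Rt = lagrangian := hRt
  subst hL hRic
  have hTmet : Tmet = metricEMT lagrangian (Riem, G) := hT
  have hθcan : θcan = canonicalEMT lagrangian (Riem, G) := hθ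
  rw [hTmet, hθcan, ← sub_eq_iff_eq_add', metricEMT_sub_canonicalEMT hdet.ne]
  rfl

/-- the metric and canonical energy-momentum tensor densities of the
Einstein-Hilbert-Cartan Lagrangian differ exactly by `R̃_ν^μ − R̃^μ_ν`
(Eqs. (19)–(20) with `16πG = 1`). -/
theorem ehc_emt_relation
    (Riem : Fin 4 → Fin 4 → Fin 4 → Fin 4 → ℝ)
    (G : Matrix (Fin 4) (Fin 4) ℝ) (hG : G.IsSymm) (hdet : G.det < 0)
    (Ric : Fin 4 → Fin 4 → ℝ) (hRic : Ric = fun ξ l => ∑ η, Riem η ξ η l)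
    (Rt : (Fin 4 → Fin 4 → Fin 4 → Fin 4 → ℝ) × Matrix (Fin 4) (Fin 4) ℝ → ℝ)
    (hRt : Rt = fun x =>
      (∑ ξ, ∑ l, (∑ η, x.1 η ξ η l) * x.2 ξ l) * (-x.2.det) ^ (-(1 / 2) : ℝ))
    (Tmet θcan : Fin 4 → Fin 4 → ℝ)
    (hT : Tmet = fun μ ν =>
      (∑ β, fderiv ℝ Rt (Riem, G) (0, Matrix.single ν β 1) * G μ β)
      + (∑ β, fderiv ℝ Rt (Riem, G) (0, Matrix.single β ν 1) * G β μ))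
    (hθ : θcan = fun μ ν =>
      (∑ η, ∑ ξ, ∑ l, fderiv ℝ Rt (Riem, G)
          ((fun a b c d => if a = η ∧ b = ξ ∧ c = μ ∧ d = l then 1 else 0), 0)
          * Riem η ξ ν l)
      + (∑ η, ∑ ξ, ∑ β, fderiv ℝ Rt (Riem, G)
          ((fun a b c d => if a = η ∧ b = ξ ∧ c = β ∧ d = μ then 1 else 0), 0)
          * Riem η ξ β ν)
      - (if μ = ν then Rt (Riem, G) else 0)) :
    ∀ μ ν : Fin 4,
      Tmet μ ν = θcan μ ν
        + ((∑ β, Ric ν β * G μ β) - (∑ ξ, ∑ l, Riem μ ξ ν l * G ξ l))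
          * (-G.det) ^ (-(1 / 2) : ℝ) :=
  ehc_emt_relation_general Riem G hdet Ric hRic Rt hRt Tmet θcan hT hθ
end

section
/- Let Riem : Fin 4 → Fin 4 → Fin 4 → Fin 4 → ℝ (the components R^k_{iξλ}, with first two arguments Lorentz indices and last two space-time indices), let e : Matrix (Fin 4) (Fin 4) ℝ be invertible (the vierbein components e_i^μ, first argument the Lorentz index), and let ηM : Matrix (Fin 4) (Fin 4) ℝ = Matrix.diagonal ![1, −1, −1, −1] be the Minkowski metric. With ε = (det e)⁻¹ (the determinant of the dual vierbein), define the vierbein Einstein-Hilbert-Cartan density R̃(Riem, e) = ∑_{k,i,j,ξ,λ} Riem k i ξ λ · e k ξ · e j λ · ηM i j · ε. Then for all μ, ν ∈ Fin 4: −∑_{m} (∂R̃/∂e_{(m,ν)}) · e m μ + ∑_{n,m,λ} (∂R̃/∂Riem_{(n,m,μ,λ)}) · Riem n m ν λ + ∑_{n,m,β} (∂R̃/∂Riem_{(n,m,β,μ)}) · Riem n m β ν = (if μ = ν then R̃(Riem, e) else 0), where the partial derivatives are Fréchet partial derivatives at (Riem, e). -/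
/-!
The left-hand side is the derivative of `R̃` along the generator `X = E_{μν}` of linear changes of
the space-time coordinates, which moves the vierbein by `-e X` and both space-time slots of the
curvature by `X`. Every space-time index of `R^k_{iξλ} e_k^ξ e_j^λ η^{ij}` is contracted between
a curvature slot and a vierbein, so this contraction does not move, while by Jacobi's formula
`det e` moves by `-det e · tr X`. Hence `R̃ = (contraction) · (det e)⁻¹` moves by
`tr X · R̃ = δ_{μν} R̃`.
-/

open Matrix

section Contraction

variable {ι α : Type*} [Fintype ι]

section CommSemiring

variable [CommSemiring α]

def curvatureContraction (η : Matrix ι ι α) (R : ι → ι → ι → ι → α) (e f : Matrix ι ι α) : α :=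
  ∑ k, ∑ i, ∑ j, ∑ ξ, ∑ l, R k i ξ l * e k ξ * f j l * η i j

def spacetimeAction (X : Matrix ι ι α) (R : ι → ι → ι → ι → α) : ι → ι → ι → ι → α :=
  fun k i ξ l => ∑ a, X ξ a * R k i a l + ∑ b, X l b * R k i ξ b

theorem sum_sum_mul_mul_eq_dotProduct_mulVec (M : Matrix ι ι α) (a b : ι → α) :
    ∑ ξ, ∑ l, M ξ l * a ξ * b l = a ⬝ᵥ (M *ᵥ b) := by
  simp only [dotProduct, mulVec, Finset.mul_sum]
  exact Finset.sum_congr rfl fun _ _ => Finset.sum_congr rfl fun _ _ => by ring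

theorem curvatureContraction_eq_sum_dotProduct (η : Matrix ι ι α) (R : ι → ι → ι → ι → α)
    (e f : Matrix ι ι α) :
    curvatureContraction η R e f = ∑ k, ∑ i, ∑ j, e k ⬝ᵥ (of (R k i) *ᵥ f j) * η i j := by
  simp only [curvatureContraction, ← Finset.sum_mul, ← sum_sum_mul_mul_eq_dotProduct_mulVec,
    of_apply]

theorem curvatureContraction_spacetimeAction (η X : Matrix ι ι α) (R : ι → ι → ι → ι → α)
    (e f : Matrix ι ι α) :
    curvatureContraction η (spacetimeAction X R) e f =
      curvatureContraction η R (e * X) f + curvatureContraction η R e (f * X) := by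
  have hR (k i : ι) : of (spacetimeAction X R k i) = X * of (R k i) + of (R k i) * Xᵀ := by
    ext ξ l
    simp [spacetimeAction, mul_apply, mul_comm]
  have hrow (g : Matrix ι ι α) (k : ι) : (g * X) k = g k ᵥ* X := rfl
  simp only [curvatureContraction_eq_sum_dotProduct, ← Finset.sum_add_distrib, ← add_mul, hR,
    add_mulVec, dotProduct_add, ← mulVec_mulVec, dotProduct_mulVec, mulVec_transpose, hrow]

end CommSemiring

section CommRing

variable [CommRing α]

theorem curvatureContraction_neg_left (η : Matrix ι ι α) (R : ι → ι → ι → ι → α)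
    (e f : Matrix ι ι α) :
    curvatureContraction η R (-e) f = -curvatureContraction η R e f := by
  simp only [curvatureContraction, Matrix.neg_apply, mul_neg, neg_mul, Finset.sum_neg_distrib]

theorem curvatureContraction_neg_right (η : Matrix ι ι α) (R : ι → ι → ι → ι → α)
    (e f : Matrix ι ι α) :
    curvatureContraction η R e (-f) = -curvatureContraction η R e f := by
  simp only [curvatureContraction, Matrix.neg_apply, mul_neg, neg_mul, Finset.sum_neg_distrib]

/-- The derivative at `t = 0` of the action of `A = 1 - t X` on `(R, e)`: `e ↦ e A`, while `A⁻¹`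
acts on both space-time slots of `R`. -/
def coordinateGenerator (X : Matrix ι ι α) (x : (ι → ι → ι → ι → α) × Matrix ι ι α) :
    (ι → ι → ι → ι → α) × Matrix ι ι α :=
  (spacetimeAction X x.1, -(x.2 * X))

end CommRing

noncomputable def vierbeinDensity [DecidableEq ι] [Field α] (η : Matrix ι ι α)
    (x : (ι → ι → ι → ι → α) × Matrix ι ι α) : α :=
  curvatureContraction η x.1 x.2 x.2 * x.2.det⁻¹

end Contraction

attribute [local instance] Matrix.normedAddCommGroup Matrix.normedSpace

section Determinant

variable {ι 𝕜 : Type*} [Fintype ι] [DecidableEq ι] [NontriviallyNormedField 𝕜]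

noncomputable def Matrix.detContinuousMultilinear :
    ContinuousMultilinearMap 𝕜 (fun _ : ι => ι → 𝕜) 𝕜 :=
  { detRowAlternating.toMultilinearMap with cont := continuous_id.matrix_det }

noncomputable def Matrix.detDeriv (e : Matrix ι ι 𝕜) : Matrix ι ι 𝕜 →L[𝕜] 𝕜 :=
  detContinuousMultilinear.linearDeriv e

theorem Matrix.hasFDerivAt_det_s17 (e : Matrix ι ι 𝕜) :
    HasFDerivAt (fun A : Matrix ι ι 𝕜 => A.det) (detDeriv e) e := by
  -- `by exact`: the normed structures on `Matrix ι ι 𝕜` and `ι → ι → 𝕜` agree only up to unfolding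
  exact detContinuousMultilinear.hasFDerivAt e

theorem Matrix.detDeriv_single (e : Matrix ι ι 𝕜) (m ν : ι) :
    detDeriv e (single m ν 1) = e.adjugate ν m := by
  rw [detDeriv]
  erw [ContinuousMultilinearMap.linearDeriv_apply, Finset.sum_eq_single m]
  · have hrow : single m ν (1 : 𝕜) m = Pi.single ν 1 := by
      ext b
      simp [single_apply, Pi.single_apply, eq_comm]
    rw [adjugate_apply, hrow]
    rfl
  · intro i _ him
    rw [funext (single_apply_of_row_ne (Ne.symm him) ν · (1 : 𝕜))]
    exact detContinuousMultilinear.map_update_zero e i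
  · simp

theorem Matrix.detDeriv_apply (e A : Matrix ι ι 𝕜) : detDeriv e A = trace (e.adjugate * A) := by
  have hsingle (i j : ι) : single i j (A i j) = A i j • single i j 1 := by
    rw [smul_single, smul_eq_mul, mul_one]
  conv_lhs => rw [matrix_eq_sum_single A]
  simp only [map_sum, hsingle, map_smul, detDeriv_single, trace, diag, mul_apply, smul_eq_mul]
  rw [Finset.sum_comm]
  exact Finset.sum_congr rfl fun _ _ => Finset.sum_congr rfl fun _ _ => mul_comm _ _

theorem Matrix.detDeriv_mul_right (e X : Matrix ι ι 𝕜) : detDeriv e (e * X) = e.det * trace X := by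
  rw [detDeriv_apply, ← Matrix.mul_assoc, adjugate_mul, smul_mul, trace_smul, one_mul, smul_eq_mul]

end Determinant

section Density

variable {ι : Type*} [Fintype ι]

theorem hasLineDerivAt_curvatureContraction (η : Matrix ι ι ℝ)
    (x v : (ι → ι → ι → ι → ℝ) × Matrix ι ι ℝ) :
    HasLineDerivAt ℝ (fun y => curvatureContraction η y.1 y.2 y.2)
      (curvatureContraction η v.1 x.2 x.2 + curvatureContraction η x.1 v.2 x.2 +
        curvatureContraction η x.1 x.2 v.2) x v := by
  have haffine (a b : ℝ) : HasDerivAt (fun t : ℝ => a + t * b) b 0 := by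
    simpa using ((hasDerivAt_id (0 : ℝ)).mul_const b).const_add a
  have hsum : HasDerivAt (fun t : ℝ => ∑ k, ∑ i, ∑ j, ∑ ξ, ∑ l,
      (x.1 k i ξ l + t * v.1 k i ξ l) * (x.2 k ξ + t * v.2 k ξ) * (x.2 j l + t * v.2 j l) *
        η i j) _ 0 :=
    HasDerivAt.fun_sum fun k _ => HasDerivAt.fun_sum fun i _ => HasDerivAt.fun_sum fun j _ =>
      HasDerivAt.fun_sum fun ξ _ => HasDerivAt.fun_sum fun l _ =>
        (((haffine _ _).fun_mul (haffine _ _)).fun_mul (haffine _ _)).mul_const _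
  refine hsum.congr_deriv ?_
  simp only [curvatureContraction, ← Finset.sum_add_distrib, zero_mul, add_zero]
  exact Finset.sum_congr rfl fun _ _ => Finset.sum_congr rfl fun _ _ => Finset.sum_congr rfl
    fun _ _ => Finset.sum_congr rfl fun _ _ => Finset.sum_congr rfl fun _ _ => by ring

variable [DecidableEq ι]

theorem hasLineDerivAt_vierbeinDensity (η : Matrix ι ι ℝ)
    (x v : (ι → ι → ι → ι → ℝ) × Matrix ι ι ℝ) (hx : x.2.det ≠ 0) :
    HasLineDerivAt ℝ (vierbeinDensity η)
      ((curvatureContraction η v.1 x.2 x.2 + curvatureContraction η x.1 v.2 x.2 +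
          curvatureContraction η x.1 x.2 v.2) * x.2.det⁻¹ -
        curvatureContraction η x.1 x.2 x.2 * detDeriv x.2 v.2 / x.2.det ^ 2) x v := by
  have hdet : HasLineDerivAt ℝ (fun y : (ι → ι → ι → ι → ℝ) × Matrix ι ι ℝ => y.2.det)
      (detDeriv x.2 v.2) x v :=
    (hasFDerivAt_det_s17 x.2).hasLineDerivAt v.2
  refine ((hasLineDerivAt_curvatureContraction η x v).fun_mul (hdet.inv ?_)).congr_deriv ?_
  · simpa using hx
  · simp only [Prod.snd_add, Prod.smul_snd, Pi.inv_apply, zero_smul, add_zero]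
    ring

theorem differentiableAt_vierbeinDensity (η : Matrix ι ι ℝ)
    (x : (ι → ι → ι → ι → ℝ) × Matrix ι ι ℝ) (hx : x.2.det ≠ 0) :
    DifferentiableAt ℝ (vierbeinDensity η) x := by
  have hS : Differentiable ℝ (fun y : (ι → ι → ι → ι → ℝ) × Matrix ι ι ℝ =>
      curvatureContraction η y.1 y.2 y.2) := by
    unfold curvatureContraction
    fun_prop
  exact hS.differentiableAt.mul
    (((hasFDerivAt_det_s17 x.2).differentiableAt.comp x differentiableAt_snd).inv hx)

theorem fderiv_vierbeinDensity_coordinateGenerator (η X : Matrix ι ι ℝ)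
    (x : (ι → ι → ι → ι → ℝ) × Matrix ι ι ℝ) (hx : x.2.det ≠ 0) :
    fderiv ℝ (vierbeinDensity η) x (coordinateGenerator X x) = trace X * vierbeinDensity η x := by
  have hline := hasLineDerivAt_vierbeinDensity η x (coordinateGenerator X x) hx
  refine (((differentiableAt_vierbeinDensity η x hx).hasFDerivAt.hasLineDerivAt _).unique
    hline).trans ?_
  simp only [coordinateGenerator, curvatureContraction_spacetimeAction,
    curvatureContraction_neg_left, curvatureContraction_neg_right, map_neg, detDeriv_mul_right,
    vierbeinDensity]
  field_simp
  ring

theorem fderiv_apply_coordinateGenerator_single (f : (ι → ι → ι → ι → ℝ) × Matrix ι ι ℝ → ℝ)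
    (x : (ι → ι → ι → ι → ℝ) × Matrix ι ι ℝ) (μ ν : ι) :
    fderiv ℝ f x (coordinateGenerator (single μ ν 1) x) =
      -(∑ m, fderiv ℝ f x (0, single m ν 1) * x.2 m μ)
      + (∑ n, ∑ m, ∑ l, fderiv ℝ f x
          ((fun a b c d => if a = n ∧ b = m ∧ c = μ ∧ d = l then 1 else 0), 0) * x.1 n m ν l)
      + (∑ n, ∑ m, ∑ β, fderiv ℝ f x
          ((fun a b c d => if a = n ∧ b = m ∧ c = β ∧ d = μ then 1 else 0), 0) * x.1 n m β ν) := by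
  have hgen : coordinateGenerator (single μ ν 1) x =
      ∑ m, (-x.2 m μ) • ((0 : ι → ι → ι → ι → ℝ), single m ν 1)
      + (∑ n, ∑ m, ∑ l, x.1 n m ν l •
          ((fun a b c d => if a = n ∧ b = m ∧ c = μ ∧ d = l then 1 else 0), 0))
      + (∑ n, ∑ m, ∑ β, x.1 n m β ν •
          ((fun a b c d => if a = n ∧ b = m ∧ c = β ∧ d = μ then 1 else 0), 0)) := by
    ext <;> simp [coordinateGenerator, spacetimeAction, single_apply, mul_apply, Prod.fst_sum,
      Prod.snd_sum, Finset.sum_apply, Matrix.sum_apply, ite_and, Finset.sum_ite_irrel, eq_comm]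
  simp only [hgen, map_add, map_sum, map_smul, smul_eq_mul, neg_mul, Finset.sum_neg_distrib,
    mul_comm]

end Density

theorem vierbein_ehc_holonomic_identity_general
    (Riem : Fin 4 → Fin 4 → Fin 4 → Fin 4 → ℝ)
    (e : Matrix (Fin 4) (Fin 4) ℝ) (he : IsUnit e.det)
    (ηM : Matrix (Fin 4) (Fin 4) ℝ)
    (Rt : (Fin 4 → Fin 4 → Fin 4 → Fin 4 → ℝ) × Matrix (Fin 4) (Fin 4) ℝ → ℝ)
    (hRt : Rt = fun x =>
      ∑ k, ∑ i, ∑ j, ∑ ξ, ∑ l,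
        x.1 k i ξ l * x.2 k ξ * x.2 j l * ηM i j * (x.2.det)⁻¹) :
    ∀ μ ν : Fin 4,
      -(∑ m, fderiv ℝ Rt (Riem, e) (0, Matrix.single m ν 1) * e m μ)
      + (∑ n, ∑ m, ∑ l, fderiv ℝ Rt (Riem, e)
          ((fun a b c d => if a = n ∧ b = m ∧ c = μ ∧ d = l then 1 else 0), 0)
          * Riem n m ν l)
      + (∑ n, ∑ m, ∑ β, fderiv ℝ Rt (Riem, e)
          ((fun a b c d => if a = n ∧ b = m ∧ c = β ∧ d = μ then 1 else 0), 0)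
          * Riem n m β ν)
      = if μ = ν then Rt (Riem, e) else 0 := by
  intro μ ν
  obtain rfl : Rt = vierbeinDensity ηM := by
    rw [hRt]
    funext x
    simp only [vierbeinDensity, curvatureContraction, Finset.sum_mul]
  rw [← fderiv_apply_coordinateGenerator_single,
    fderiv_vierbeinDensity_coordinateGenerator ηM _ (Riem, e) he.ne_zero]
  rcases eq_or_ne μ ν with rfl | hμν
  · simp
  · simp [hμν]

/-- Eq. (22), the tensor identity for the metric (holonomic) index class
of the vierbein Einstein-Hilbert-Cartan density, with the Lorentz (nonholonomic)
indices fully contracted against the Minkowski metric. -/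
theorem vierbein_ehc_holonomic_identity
    (Riem : Fin 4 → Fin 4 → Fin 4 → Fin 4 → ℝ)
    (e : Matrix (Fin 4) (Fin 4) ℝ) (he : IsUnit e.det)
    (ηM : Matrix (Fin 4) (Fin 4) ℝ) (hη : ηM = Matrix.diagonal ![1, -1, -1, -1])
    (Rt : (Fin 4 → Fin 4 → Fin 4 → Fin 4 → ℝ) × Matrix (Fin 4) (Fin 4) ℝ → ℝ)
    (hRt : Rt = fun x =>
      ∑ k, ∑ i, ∑ j, ∑ ξ, ∑ l,
        x.1 k i ξ l * x.2 k ξ * x.2 j l * ηM i j * (x.2.det)⁻¹) :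
    ∀ μ ν : Fin 4,
      -(∑ m, fderiv ℝ Rt (Riem, e) (0, Matrix.single m ν 1) * e m μ)
      + (∑ n, ∑ m, ∑ l, fderiv ℝ Rt (Riem, e)
          ((fun a b c d => if a = n ∧ b = m ∧ c = μ ∧ d = l then 1 else 0), 0)
          * Riem n m ν l)
      + (∑ n, ∑ m, ∑ β, fderiv ℝ Rt (Riem, e)
          ((fun a b c d => if a = n ∧ b = m ∧ c = β ∧ d = μ then 1 else 0), 0)
          * Riem n m β ν)
      = if μ = ν then Rt (Riem, e) else 0 :=
  vierbein_ehc_holonomic_identity_general Riem e he ηM Rt hRt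
end
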